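/- arXiv:2503.22131 — 14 statements merged into one kernel-verified Lean document; each statement's English description precedes it below -/
import Mathlib

section
/- Let P be a symmetric real n×n matrix, H a real m×n matrix, and α, β > 0 real numbers with α(‖P‖ + β‖H‖²) < 1, where ‖·‖ denotes the ℓ²→ℓ² operator norm. Then the (n+m)×(n+m) block matrix M = [[α⁻¹·I − P, −Hᵀ], [−H, β⁻¹·I]] is positive definite: M is symmetric and vᵀMv > 0 for every nonzero v ∈ ℝ^{n+m}. -/
open Matrix

/-- The ℓ²→ℓ² operator norm of a real matrix. -/
noncomputable def l2OpNorm {m n : ℕ} (A : Matrix (Fin m) (Fin n) ℝ) : ℝ :=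
  ‖(Matrix.toEuclideanLin A).toContinuousLinearMap‖

lemma l2OpNorm_nonneg {m n : ℕ} (A : Matrix (Fin m) (Fin n) ℝ) : 0 ≤ l2OpNorm A :=
  norm_nonneg _

lemma dot_mulVec_le {k l : ℕ} (A : Matrix (Fin k) (Fin l) ℝ) (y : Fin k → ℝ) (x : Fin l → ℝ) :
    y ⬝ᵥ A *ᵥ x ≤ l2OpNorm A *
      (‖(WithLp.equiv 2 (Fin k → ℝ)).symm y‖ * ‖(WithLp.equiv 2 (Fin l → ℝ)).symm x‖) := by
  have h1 : y ⬝ᵥ A *ᵥ x =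
      inner ℝ ((WithLp.equiv 2 (Fin k → ℝ)).symm y)
        ((Matrix.toEuclideanLin A) ((WithLp.equiv 2 (Fin l → ℝ)).symm x)) := by
    simp [EuclideanSpace.inner_toLp_toLp, dotProduct_comm]
  rw [h1]
  calc inner ℝ ((WithLp.equiv 2 (Fin k → ℝ)).symm y)
        ((Matrix.toEuclideanLin A) ((WithLp.equiv 2 (Fin l → ℝ)).symm x))
      ≤ ‖(WithLp.equiv 2 (Fin k → ℝ)).symm y‖ *
        ‖(Matrix.toEuclideanLin A) ((WithLp.equiv 2 (Fin l → ℝ)).symm x)‖ :=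
      real_inner_le_norm _ _
    _ ≤ ‖(WithLp.equiv 2 (Fin k → ℝ)).symm y‖ *
        (l2OpNorm A * ‖(WithLp.equiv 2 (Fin l → ℝ)).symm x‖) := by
      have := (Matrix.toEuclideanLin A).toContinuousLinearMap.le_opNorm
        ((WithLp.equiv 2 (Fin l → ℝ)).symm x)
      simp only [LinearMap.coe_toContinuousLinearMap'] at this
      exact mul_le_mul_of_nonneg_left this (norm_nonneg _)
    _ = _ := by ring

lemma dot_self_eq {k : ℕ} (x : Fin k → ℝ) :
    x ⬝ᵥ x = ‖(WithLp.equiv 2 (Fin k → ℝ)).symm x‖ ^ 2 := by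
  rw [← real_inner_self_eq_norm_sq, EuclideanSpace.inner_eq_star_dotProduct]
  simp

/-- the PIPG matrix `M = [[α⁻¹I − P, −Hᵀ], [−H, β⁻¹I]]` is positive
definite when `P` is symmetric and `α(‖P‖ + β‖H‖²) < 1` with `α, β > 0`. -/
theorem stmt0 {n m : ℕ}
    (P : Matrix (Fin n) (Fin n) ℝ) (hP : P.IsSymm)
    (H : Matrix (Fin m) (Fin n) ℝ)
    (α β : ℝ) (hα : 0 < α) (hβ : 0 < β)
    (hstep : α * (l2OpNorm P + β * (l2OpNorm H) ^ 2) < 1) :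
    (Matrix.fromBlocks (α⁻¹ • (1 : Matrix (Fin n) (Fin n) ℝ) - P) (-Hᵀ)
      (-H) (β⁻¹ • (1 : Matrix (Fin m) (Fin m) ℝ))).PosDef := by
  have hkey : l2OpNorm P + β * (l2OpNorm H) ^ 2 < α⁻¹ := by
    have h1 : α * (l2OpNorm P + β * (l2OpNorm H) ^ 2) < α * α⁻¹ := by
      rw [mul_inv_cancel₀ hα.ne']; exact hstep
    exact lt_of_mul_lt_mul_left h1 hα.le
  rw [Matrix.posDef_iff_dotProduct_mulVec]
  constructor
  · rw [Matrix.IsHermitian, Matrix.conjTranspose_eq_transpose_of_trivial,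
      Matrix.fromBlocks_transpose]
    rw [Matrix.transpose_sub, Matrix.transpose_smul, Matrix.transpose_one, hP,
      Matrix.transpose_neg, Matrix.transpose_neg, Matrix.transpose_transpose,
      Matrix.transpose_smul, Matrix.transpose_one]
  · intro v hv
    set x : Fin n → ℝ := v ∘ Sum.inl with hx
    set y : Fin m → ℝ := v ∘ Sum.inr with hy
    have hvsum : v = Sum.elim x y := by
      funext i; cases i <;> rfl
    rw [hvsum, star_trivial, Matrix.fromBlocks_mulVec, Matrix.dotProduct_block]
    simp only [Sum.elim_comp_inl, Sum.elim_comp_inr, Sum.elim_inl, Sum.elim_inr]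
    have hexp : x ⬝ᵥ ((α⁻¹ • (1 : Matrix (Fin n) (Fin n) ℝ) - P) *ᵥ x + (-Hᵀ) *ᵥ y)
        + y ⬝ᵥ ((-H) *ᵥ x + (β⁻¹ • (1 : Matrix (Fin m) (Fin m) ℝ)) *ᵥ y)
        = α⁻¹ * (x ⬝ᵥ x) - x ⬝ᵥ P *ᵥ x - 2 * (y ⬝ᵥ H *ᵥ x) + β⁻¹ * (y ⬝ᵥ y) := by
      have hHt : x ⬝ᵥ Hᵀ *ᵥ y = y ⬝ᵥ H *ᵥ x := by
        rw [Matrix.dotProduct_mulVec, Matrix.vecMul_transpose, dotProduct_comm]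
      simp only [dotProduct_add, Matrix.sub_mulVec, Matrix.neg_mulVec,
        dotProduct_sub, dotProduct_neg, Matrix.smul_mulVec,
        Matrix.one_mulVec, dotProduct_smul, smul_eq_mul, hHt]
      ring
    rw [hexp]
    set a := ‖(WithLp.equiv 2 (Fin n → ℝ)).symm x‖ with ha
    set b := ‖(WithLp.equiv 2 (Fin m → ℝ)).symm y‖ with hb
    by_cases hx0 : x = 0
    · have hy0 : y ≠ 0 := by
        intro h; apply hv; rw [hvsum, hx0, h]; funext i; cases i <;> rfl
      have hb0 : 0 < b := by
        rw [hb]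
        refine norm_pos_iff.2 ?_
        intro h
        exact hy0 (by simpa using congrArg (WithLp.equiv 2 (Fin m → ℝ)) h)
      rw [hx0]
      simp only [dotProduct_zero, zero_dotProduct, Matrix.mulVec_zero,
        mul_zero, zero_sub, sub_zero, neg_zero, zero_add]
      have hyy : y ⬝ᵥ y = b ^ 2 := dot_self_eq y
      rw [hyy]
      positivity
    · have ha0 : 0 < a := by
        rw [ha]
        refine norm_pos_iff.2 ?_
        intro h
        exact hx0 (by simpa using congrArg (WithLp.equiv 2 (Fin n → ℝ)) h)
      have hXX : x ⬝ᵥ x = a ^ 2 := dot_self_eq x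
      have hYY : y ⬝ᵥ y = b ^ 2 := dot_self_eq y
      have hPx : x ⬝ᵥ P *ᵥ x ≤ l2OpNorm P * (a * a) := dot_mulVec_le P x x
      have hHx : y ⬝ᵥ H *ᵥ x ≤ l2OpNorm H * (b * a) := dot_mulVec_le H y x
      have hb0 : 0 ≤ b := norm_nonneg _
      rw [hXX, hYY]
      have hc : 0 < α⁻¹ - l2OpNorm P - β * (l2OpNorm H) ^ 2 := by linarith
      have hq : 0 < (α⁻¹ - l2OpNorm P - β * (l2OpNorm H) ^ 2) * a ^ 2
          + β * (l2OpNorm H * a - β⁻¹ * b) ^ 2 :=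
        add_pos_of_pos_of_nonneg (mul_pos hc (pow_pos ha0 2))
          (mul_nonneg hβ.le (sq_nonneg _))
      have hid : (α⁻¹ - l2OpNorm P - β * (l2OpNorm H) ^ 2) * a ^ 2
          + β * (l2OpNorm H * a - β⁻¹ * b) ^ 2
          = α⁻¹ * a ^ 2 - l2OpNorm P * (a * a) - 2 * (l2OpNorm H * (b * a))
            + β⁻¹ * b ^ 2 := by
        field_simp
        ring
      linarith [hPx, hHx]
end

section
/- Let E be a real inner product space, T̃ : E → E nonexpansive, λ ∈ [0,1), T x = λ • x + (1 − λ) • T̃ x, and R x = T x − x. If y ∈ E satisfies T y = y, then for every z ∈ E, ‖T z − y‖² ≤ ‖z − y‖² − λ(1 − λ)‖R z‖². -/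
lemma convex_norm_sq_id {E : Type*} [NormedAddCommGroup E] [InnerProductSpace ℝ E]
    (l : ℝ) (a b : E) :
    ‖l • a + (1 - l) • b‖ ^ 2 =
      l * ‖a‖ ^ 2 + (1 - l) * ‖b‖ ^ 2 - l * (1 - l) * ‖a - b‖ ^ 2 := by
  rw [← real_inner_self_eq_norm_sq, ← real_inner_self_eq_norm_sq,
    ← real_inner_self_eq_norm_sq, ← real_inner_self_eq_norm_sq,
    inner_add_add_self, inner_sub_sub_self]
  simp only [real_inner_smul_left, real_inner_smul_right]
  rw [real_inner_comm b a]
  ring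

/-- Fejér-type inequality. If `T̃` is nonexpansive, `λ ∈ [0,1)`,
`T x = λ•x + (1-λ)•T̃ x`, `R x = T x - x`, and `y` is a fixed point of `T`, then
`‖T z - y‖² ≤ ‖z - y‖² - λ(1-λ)‖R z‖²` for every `z`. -/
theorem stmt2 {E : Type*} [NormedAddCommGroup E] [InnerProductSpace ℝ E]
    (T' : E → E) (hT' : ∀ x y : E, ‖T' x - T' y‖ ≤ ‖x - y‖)
    (l : ℝ) (hl0 : 0 ≤ l) (hl1 : l < 1)
    (T R : E → E)
    (hT : ∀ x, T x = l • x + (1 - l) • T' x)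
    (hR : ∀ x, R x = T x - x)
    (y : E) (hy : T y = y) :
    ∀ z : E, ‖T z - y‖ ^ 2 ≤ ‖z - y‖ ^ 2 - l * (1 - l) * ‖R z‖ ^ 2 := by
  intro z
  have hne : (1 : ℝ) - l ≠ 0 := by linarith
  have hTy : T' y = y := by
    have h : l • y + (1 - l) • T' y = y := by rw [← hT]; exact hy
    have h2 : (1 - l) • T' y = (1 - l) • y := by
      linear_combination (norm := module) h
    exact smul_right_injective E hne h2
  have key : T z - y = l • (z - y) + (1 - l) • (T' z - y) := by
    rw [hT]; module
  have hRz : R z = (1 - l) • (T' z - z) := by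
    rw [hR, hT]; module
  have hdiff : (z - y) - (T' z - y) = z - T' z := by abel
  have hnormR : ‖R z‖ ^ 2 = (1 - l) ^ 2 * ‖z - T' z‖ ^ 2 := by
    rw [hRz, norm_smul, mul_pow, Real.norm_eq_abs, sq_abs, ← norm_neg (T' z - z)]
    congr 2
    abel
  rw [key, convex_norm_sq_id, hdiff, hnormR]
  have hT'le : ‖T' z - y‖ ^ 2 ≤ ‖z - y‖ ^ 2 := by
    have := hT' z y
    rw [hTy] at this
    exact pow_le_pow_left₀ (norm_nonneg _) this 2
  have h1l : (0 : ℝ) < 1 - l := by linarith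
  have hcoef : l * (1 - l) * ((1 - l) ^ 2 * ‖z - T' z‖ ^ 2) ≤ l * (1 - l) * ‖z - T' z‖ ^ 2 := by
    have h2 : (1 - l) ^ 2 ≤ 1 := by nlinarith
    have := mul_le_mul_of_nonneg_right h2 (sq_nonneg ‖z - T' z‖)
    nlinarith [mul_nonneg hl0 h1l.le, sq_nonneg ‖z - T' z‖]
  nlinarith [mul_le_mul_of_nonneg_left hT'le h1l.le]
end

section
/- Let E be a real inner product space, T̃ : E → E nonexpansive, λ ∈ (0,1), T x = λ • x + (1 − λ) • T̃ x, and R x = T x − x. Suppose T has a fixed point. Then for any sequence (z_k) with z_{k+1} = T z_k for all k, the series Σ_k ‖R z_k‖² converges, i.e. the function k ↦ ‖R z_k‖² is summable. -/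
/-- if `T̃` is nonexpansive, `λ ∈ (0,1)`, `T x = λ•x + (1-λ)•T̃ x`,
`R x = T x - x` and `T` has a fixed point, then along any orbit `z_{k+1} = T z_k`
the series `Σ_k ‖R z_k‖²` is summable. -/
theorem stmt3 {E : Type*} [NormedAddCommGroup E] [InnerProductSpace ℝ E]
    (T' : E → E) (hT' : ∀ x y : E, ‖T' x - T' y‖ ≤ ‖x - y‖)
    (l : ℝ) (hl0 : 0 < l) (hl1 : l < 1)
    (T R : E → E)
    (hT : ∀ x, T x = l • x + (1 - l) • T' x)
    (hR : ∀ x, R x = T x - x)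
    (hfix : ∃ y : E, T y = y) :
    ∀ z : ℕ → E, (∀ k, z (k + 1) = T (z k)) →
      Summable (fun k : ℕ => ‖R (z k)‖ ^ 2) := by
  obtain ⟨y, hy⟩ := hfix
  have hl1' : (0:ℝ) < 1 - l := by linarith
  have hT'y : T' y = y := by
    have h := hT y
    rw [hy] at h
    have : (1 - l) • (T' y - y) = 0 := by
      rw [smul_sub]
      have : y - l • y = (1 - l) • y := by
        rw [sub_smul, one_smul]
      linear_combination (norm := module) -h
    have := smul_eq_zero.mp this
    rcases this with h' | h'
    · exact absurd h' (ne_of_gt hl1')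
    · exact sub_eq_zero.mp h'
  -- key inequality
  have key : ∀ x : E, l * ‖R x‖ ^ 2 ≤ (1 - l) * (‖x - y‖ ^ 2 - ‖T x - y‖ ^ 2) := by
    intro x
    set a := x - y with ha
    set b := T' x - y with hb
    have hba : ‖b‖ ≤ ‖a‖ := by
      have := hT' x y
      rwa [hT'y] at this
    have h1 : T x - y = l • a + (1 - l) • b := by
      rw [hT, ha, hb]; module
    have h2 : R x = (1 - l) • (b - a) := by
      rw [hR, hT, ha, hb]; module
    have e1 : ‖l • a + (1 - l) • b‖ ^ 2
        = l ^ 2 * ‖a‖ ^ 2 + 2 * (l * (1 - l)) * (inner ℝ a b : ℝ) + (1 - l) ^ 2 * ‖b‖ ^ 2 := by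
      rw [← real_inner_self_eq_norm_sq, ← real_inner_self_eq_norm_sq, ← real_inner_self_eq_norm_sq]
      simp only [inner_add_left, inner_add_right, real_inner_smul_left, real_inner_smul_right,
        real_inner_comm b a]
      ring
    have e2 : ‖b - a‖ ^ 2 = ‖b‖ ^ 2 - 2 * (inner ℝ a b : ℝ) + ‖a‖ ^ 2 := by
      rw [← real_inner_self_eq_norm_sq, ← real_inner_self_eq_norm_sq, ← real_inner_self_eq_norm_sq]
      simp only [inner_sub_left, inner_sub_right, real_inner_comm b a]
      ring
    have e3 : ‖R x‖ ^ 2 = (1 - l) ^ 2 * ‖b - a‖ ^ 2 := by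
      rw [h2, norm_smul, Real.norm_eq_abs, abs_of_pos hl1', mul_pow]
    rw [h1, e1, e3, e2]
    have hbb : ‖b‖ ^ 2 ≤ ‖a‖ ^ 2 := by
      have := norm_nonneg b
      nlinarith
    nlinarith [sq_nonneg (‖a‖ - ‖b‖), mul_pos hl0 hl1']
  intro z hz
  -- partial sums bounded
  have hsum : ∀ n : ℕ, l * (∑ k ∈ Finset.range n, ‖R (z k)‖ ^ 2)
      ≤ (1 - l) * (‖z 0 - y‖ ^ 2 - ‖z n - y‖ ^ 2) := by
    intro n
    induction n with
    | zero => simp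
    | succ n ih =>
        rw [Finset.sum_range_succ, mul_add]
        have hk := key (z n)
        rw [← hz n] at hk
        linarith
  apply summable_of_sum_range_le (c := (1 - l) * ‖z 0 - y‖ ^ 2 / l)
  · intro k; positivity
  · intro n
    rw [le_div_iff₀ hl0]
    have := hsum n
    have hnn : (0:ℝ) ≤ ‖z n - y‖ ^ 2 := by positivity
    nlinarith
end

section
/- Let E be a finite-dimensional real inner product space, T̃ : E → E nonexpansive, λ ∈ (0,1), and T x = λ • x + (1 − λ) • T̃ x. Suppose T has a fixed point. Then for any sequence (z_k) with z_{k+1} = T z_k for all k, there exists z⋆ ∈ E with T z⋆ = z⋆ such that z_k converges to z⋆ as k → ∞. -/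
open Filter

/-- Krasnosel'skii–Mann convergence. If `E` is a finite-dimensional real
inner product space, `T̃` nonexpansive, `λ ∈ (0,1)`, `T x = λ•x + (1-λ)•T̃ x`, and `T`
has a fixed point, then any orbit `z_{k+1} = T z_k` converges to some fixed point of `T`. -/
theorem stmt5 {E : Type*} [NormedAddCommGroup E] [InnerProductSpace ℝ E]
    [FiniteDimensional ℝ E]
    (T' : E → E) (hT' : ∀ x y : E, ‖T' x - T' y‖ ≤ ‖x - y‖)
    (l : ℝ) (hl0 : 0 < l) (hl1 : l < 1)
    (T : E → E)
    (hT : ∀ x, T x = l • x + (1 - l) • T' x)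
    (hfix : ∃ y : E, T y = y) :
    ∀ z : ℕ → E, (∀ k, z (k + 1) = T (z k)) →
      ∃ zs : E, T zs = zs ∧ Tendsto z atTop (nhds zs) := by
  obtain ⟨y, hy⟩ := hfix
  intro z hz
  have hne : (1 - l) ≠ 0 := by linarith
  -- y is a fixed point of T'
  have hy' : T' y = y := by
    have h := (hT y).symm.trans hy  -- l • y + (1-l) • T' y = y
    have h2 : (1 - l) • T' y = (1 - l) • y := by
      have : (1 - l) • y = y - l • y := by rw [sub_smul, one_smul]
      rw [this, eq_sub_iff_add_eq, add_comm]
      exact h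
    exact smul_right_injective E hne h2
  set c : ℝ := l * (1 - l) with hc_def
  have hc : 0 < c := mul_pos hl0 (by linarith)
  -- inner product identity
  have key : ∀ u v : E, ‖l • u + (1 - l) • v‖ ^ 2
      = l * ‖u‖ ^ 2 + (1 - l) * ‖v‖ ^ 2 - c * ‖u - v‖ ^ 2 := by
    intro u v
    rw [norm_add_sq_real, norm_sub_sq_real, norm_smul, norm_smul,
      real_inner_smul_left, real_inner_smul_right, mul_pow, mul_pow,
      Real.norm_eq_abs, Real.norm_eq_abs, sq_abs, sq_abs, hc_def]
    ring
  -- main one-step inequality for any fixed point of T'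
  have step : ∀ (w : E), T' w = w → ∀ k,
      ‖z (k + 1) - w‖ ^ 2 + c * ‖z k - T' (z k)‖ ^ 2 ≤ ‖z k - w‖ ^ 2 := by
    intro w hw k
    have e1 : z (k + 1) - w = l • (z k - w) + (1 - l) • (T' (z k) - w) := by
      rw [hz k, hT]
      module
    rw [e1, key]
    have h1 : ‖T' (z k) - w‖ ≤ ‖z k - w‖ := by
      conv_lhs => rw [← hw]
      exact hT' _ _
    have h2 : z k - w - (T' (z k) - w) = z k - T' (z k) := by abel
    rw [h2]
    nlinarith [norm_nonneg (z k - w), norm_nonneg (T' (z k) - w),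
      pow_le_pow_left₀ (norm_nonneg (T' (z k) - w)) h1 2]
  set A : ℕ → ℝ := fun k => ‖z k - y‖ ^ 2 with hA_def
  set b : ℕ → ℝ := fun k => ‖z k - T' (z k)‖ with hb_def
  have hstep : ∀ k, A (k + 1) + c * b k ^ 2 ≤ A k := fun k => step y hy' k
  have hA_anti : Antitone A := antitone_nat_of_succ_le fun k => by
    have := hstep k
    nlinarith [sq_nonneg (b k)]
  have hA_bdd : BddBelow (Set.range A) := ⟨0, by rintro _ ⟨k, rfl⟩; positivity⟩
  have hA_lim : Tendsto A atTop (nhds (⨅ k, A k)) := tendsto_atTop_ciInf hA_anti hA_bdd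
  have hA_lim' : Tendsto (fun k => A (k + 1)) atTop (nhds (⨅ k, A k)) :=
    hA_lim.comp (tendsto_add_atTop_nat 1)
  have hdiff : Tendsto (fun k => A k - A (k + 1)) atTop (nhds 0) := by
    simpa using hA_lim.sub hA_lim'
  have hb2 : Tendsto (fun k => b k ^ 2) atTop (nhds 0) := by
    have hsq : Tendsto (fun k => c * b k ^ 2) atTop (nhds 0) := by
      apply squeeze_zero (fun k => by positivity) (fun k => by linarith [hstep k]) hdiff
    have := hsq.div_const c
    simpa [mul_div_cancel_left₀ _ hc.ne'] using this
  have hb : Tendsto b atTop (nhds 0) := by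
    have h := (Real.continuous_sqrt.tendsto 0).comp hb2
    have heq : ((fun x => Real.sqrt x) ∘ fun k => b k ^ 2) = b :=
      funext fun k => Real.sqrt_sq (norm_nonneg _)
    rwa [heq, Real.sqrt_zero] at h
  -- boundedness of the orbit
  have hmem : ∀ k, z k ∈ Metric.closedBall y ‖z 0 - y‖ := by
    intro k
    rw [Metric.mem_closedBall, dist_eq_norm]
    have h := hA_anti (Nat.zero_le k)
    have := Real.sqrt_le_sqrt h
    rwa [Real.sqrt_sq (norm_nonneg _), Real.sqrt_sq (norm_nonneg _)] at this
  obtain ⟨zs, _, φ, hφ, hconv⟩ :=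
    (isCompact_closedBall y ‖z 0 - y‖).tendsto_subseq hmem
  -- T' is continuous
  have hcont : Continuous T' := by
    refine (LipschitzWith.of_dist_le_mul (K := 1) ?_).continuous
    intro x x'
    simpa [dist_eq_norm] using hT' x x'
  -- zs is a fixed point of T'
  have hzs' : T' zs = zs := by
    have h1 : Tendsto (fun j => T' (z (φ j))) atTop (nhds (T' zs)) :=
      (hcont.tendsto zs).comp hconv
    have h2 : Tendsto (fun j => z (φ j) - T' (z (φ j))) atTop (nhds 0) := by
      have hv : Tendsto (fun k => z k - T' (z k)) atTop (nhds 0) :=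
        tendsto_zero_iff_norm_tendsto_zero.2 hb
      exact hv.comp hφ.tendsto_atTop
    have h3 : Tendsto (fun j => z (φ j) - (z (φ j) - T' (z (φ j)))) atTop
        (nhds (zs - 0)) := hconv.sub h2
    simp only [sub_sub_cancel, sub_zero] at h3
    exact tendsto_nhds_unique h1 h3
  have hTzs : T zs = zs := by
    rw [hT, hzs', ← add_smul]
    simp
  refine ⟨zs, hTzs, ?_⟩
  -- Fejér monotonicity wrt zs gives full convergence
  set d : ℕ → ℝ := fun k => ‖z k - zs‖ with hd_def
  have hd_anti : Antitone d := antitone_nat_of_succ_le fun k => by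
    have h := step zs hzs' k
    have h2 : d (k + 1) ^ 2 ≤ d k ^ 2 := by nlinarith [sq_nonneg (b k)]
    have := Real.sqrt_le_sqrt h2
    rwa [Real.sqrt_sq (norm_nonneg _), Real.sqrt_sq (norm_nonneg _)] at this
  have hd_bdd : BddBelow (Set.range d) := ⟨0, by rintro _ ⟨k, rfl⟩; positivity⟩
  have hd_lim : Tendsto d atTop (nhds (⨅ k, d k)) := tendsto_atTop_ciInf hd_anti hd_bdd
  have hd_sub : Tendsto (fun j => d (φ j)) atTop (nhds 0) := by
    have h := (hconv.sub (tendsto_const_nhds (x := zs))).norm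
    simpa [Function.comp] using h
  have hd_sub' : Tendsto (fun j => d (φ j)) atTop (nhds (⨅ k, d k)) :=
    hd_lim.comp hφ.tendsto_atTop
  have hinf : (⨅ k, d k) = 0 := tendsto_nhds_unique hd_sub' hd_sub
  rw [tendsto_iff_norm_sub_tendsto_zero]
  rw [hinf] at hd_lim
  exact hd_lim
end

section
/- Let E be a real Banach space, K ⊆ E a convex set, R : E → E a map, and R' : E → (E →L[ℝ] E) an assignment of continuous linear maps such that: (i) R has Fréchet derivative R'(x) at every x ∈ K; (ii) there is γ ≥ 0 with ‖R'(x) − R'(y)‖ ≤ γ‖x − y‖ for all x, y ∈ K; (iii) there is μ > 0 with μ‖ξ‖ ≤ ‖R'(x) ξ‖ for all x ∈ K and all ξ ∈ E. Let z ∈ K and p ∈ E satisfy R'(z) p = −R(z), and suppose z + θ • p ∈ K for every θ ∈ [0,1]. Then ‖R(z + p)‖ ≤ (γ / (2μ²)) ‖R(z)‖². -/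
/-- local quadratic decrease of the residual for the Newton step.
If `R` is Fréchet differentiable on a convex set `K` with `γ`-Lipschitz derivative
bounded below by `μ > 0`, and `R'(z) p = -R(z)` with the segment `[z, z+p] ⊆ K`,
then `‖R(z+p)‖ ≤ (γ/(2μ²))‖R z‖²`. -/
theorem stmt6 {E : Type*} [NormedAddCommGroup E] [NormedSpace ℝ E] [CompleteSpace E]
    (K : Set E) (hK : Convex ℝ K)
    (R : E → E) (R' : E → E →L[ℝ] E)
    (hderiv : ∀ x ∈ K, HasFDerivAt R (R' x) x)
    (γ : ℝ) (hγ : 0 ≤ γ)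
    (hLip : ∀ x ∈ K, ∀ y ∈ K, ‖R' x - R' y‖ ≤ γ * ‖x - y‖)
    (μ : ℝ) (hμ : 0 < μ)
    (hlower : ∀ x ∈ K, ∀ ξ : E, μ * ‖ξ‖ ≤ ‖R' x ξ‖)
    (z p : E) (hz : z ∈ K)
    (hp : R' z p = -R z)
    (hseg : ∀ θ ∈ Set.Icc (0 : ℝ) 1, z + θ • p ∈ K) :
    ‖R (z + p)‖ ≤ γ / (2 * μ ^ 2) * ‖R z‖ ^ 2 := by
  set q := R' z p with hq
  -- derivative of g θ = R(z+θ•p) - θ•q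
  have hf : ∀ θ ∈ Set.uIcc (0:ℝ) 1,
      HasDerivAt (fun θ : ℝ => R (z + θ • p) - θ • q) (R' (z + θ • p) p - q) θ := by
    intro θ hθ
    have hθ' : θ ∈ Set.Icc (0:ℝ) 1 := by simpa using hθ
    have hmem : z + θ • p ∈ K := hseg θ hθ'
    have h1 : HasDerivAt (fun θ : ℝ => z + θ • p) p θ := by
      simpa using ((hasDerivAt_id θ).smul_const p).const_add z
    have h2 : HasDerivAt (fun θ : ℝ => R (z + θ • p)) (R' (z + θ • p) p) θ :=
      (hderiv _ hmem).comp_hasDerivAt θ h1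
    have h3 : HasDerivAt (fun θ : ℝ => θ • q) q θ := by
      simpa using (hasDerivAt_id θ).smul_const q
    exact h2.sub h3
  -- continuity of the derivative on [0,1]
  have hcont : ContinuousOn (fun θ : ℝ => R' (z + θ • p) p - q) (Set.Icc (0:ℝ) 1) := by
    have hlip : LipschitzOnWith (Real.toNNReal (γ * ‖p‖))
        (fun θ : ℝ => R' (z + θ • p)) (Set.Icc (0:ℝ) 1) := by
      rw [lipschitzOnWith_iff_dist_le_mul]
      intro a ha b hb
      rw [dist_eq_norm, dist_eq_norm]
      have := hLip _ (hseg a ha) _ (hseg b hb)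
      have habs : z + a • p - (z + b • p) = (a - b) • p := by
        rw [sub_smul]; abel
      rw [Real.coe_toNNReal _ (by positivity)]
      calc ‖R' (z + a • p) - R' (z + b • p)‖ ≤ γ * ‖z + a • p - (z + b • p)‖ := this
        _ = γ * ‖p‖ * |a - b| := by
            rw [habs, norm_smul, Real.norm_eq_abs]; ring
        _ = γ * ‖p‖ * ‖a - b‖ := by rw [Real.norm_eq_abs]
    have h1 : ContinuousOn (fun θ : ℝ => R' (z + θ • p) p) (Set.Icc (0:ℝ) 1) := by
      exact (ContinuousLinearMap.apply ℝ E p).continuous.comp_continuousOn hlip.continuousOn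
    exact h1.sub continuousOn_const
  have hint : IntervalIntegrable (fun θ : ℝ => R' (z + θ • p) p - q) MeasureTheory.volume 0 1 := by
    apply ContinuousOn.intervalIntegrable
    simpa [Set.uIcc_of_le (zero_le_one' ℝ)] using hcont
  have key : R (z + p) = ∫ θ in (0:ℝ)..1, (R' (z + θ • p) p - q) := by
    have := intervalIntegral.integral_eq_sub_of_hasDerivAt hf hint
    rw [this]
    simp only [one_smul, zero_smul, sub_zero]
    rw [hp]
    simp
  have hb : ‖R (z + p)‖ ≤ |∫ θ in (0:ℝ)..1, γ * θ * ‖p‖ ^ 2| := by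
    rw [key]
    apply intervalIntegral.norm_integral_le_abs_of_norm_le
    · filter_upwards [MeasureTheory.ae_restrict_mem measurableSet_uIoc] with θ hθ
      have hθ' : θ ∈ Set.Icc (0:ℝ) 1 := by
        rw [Set.uIoc_of_le (zero_le_one' ℝ)] at hθ
        exact ⟨hθ.1.le, hθ.2⟩
      have hmem : z + θ • p ∈ K := hseg θ hθ'
      have h1 : R' (z + θ • p) p - q = (R' (z + θ • p) - R' z) p := by
        simp [hq]
      rw [h1]
      calc ‖(R' (z + θ • p) - R' z) p‖ ≤ ‖R' (z + θ • p) - R' z‖ * ‖p‖ :=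
            ContinuousLinearMap.le_opNorm _ _
        _ ≤ γ * ‖z + θ • p - z‖ * ‖p‖ := by
            have := hLip _ hmem _ hz
            exact mul_le_mul_of_nonneg_right this (norm_nonneg _)
        _ = γ * θ * ‖p‖ ^ 2 := by
            have : z + θ • p - z = θ • p := by abel
            rw [this, norm_smul, Real.norm_eq_abs, abs_of_nonneg hθ'.1]; ring
    · apply Continuous.intervalIntegrable
      continuity
  have hintval : (∫ θ in (0:ℝ)..1, γ * θ * ‖p‖ ^ 2) = γ * ‖p‖ ^ 2 / 2 := by
    have : (fun θ : ℝ => γ * θ * ‖p‖ ^ 2) = fun θ : ℝ => θ * (γ * ‖p‖ ^ 2) := by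
      funext θ; ring
    rw [this, intervalIntegral.integral_mul_const, integral_id]
    ring
  rw [hintval, abs_of_nonneg (by positivity)] at hb
  have hpn : μ * ‖p‖ ≤ ‖R z‖ := by
    have := hlower z hz p
    rwa [← hq, hp, norm_neg] at this
  have h2 : (μ * ‖p‖) ^ 2 ≤ ‖R z‖ ^ 2 := pow_le_pow_left₀ (by positivity) hpn 2
  have hfin : γ * ‖p‖ ^ 2 / 2 ≤ γ / (2 * μ ^ 2) * ‖R z‖ ^ 2 := by
    rw [div_mul_eq_mul_div, div_le_div_iff₀ (by norm_num) (by positivity)]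
    nlinarith [norm_nonneg p, norm_nonneg (R z)]
  linarith
end

section
/- Let E be a real Banach space, K ⊆ E a convex set, R : E → E a map, and R' : E → (E →L[ℝ] E) an assignment of continuous linear maps such that: (i) R has Fréchet derivative R'(x) at every x ∈ K; (ii) there is γ ≥ 0 with ‖R'(x) − R'(y)‖ ≤ γ‖x − y‖ for all x, y ∈ K; (iii) there is μ > 0 with μ‖ξ‖ ≤ ‖R'(x) ξ‖ for all x ∈ K and all ξ ∈ E. Let z⋆ ∈ K satisfy R(z⋆) = 0, let z ∈ K be such that z⋆ + θ • (z − z⋆) ∈ K for every θ ∈ [0,1], and let p ∈ E satisfy R'(z) p = −R(z). Then ‖z + p − z⋆‖ ≤ (γ / (2μ)) ‖z − z⋆‖². -/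
/-- local quadratic convergence of the Newton step toward a zero `z⋆`
of `R`. Under the same differentiability, Lipschitz and lower-bound hypotheses as
Statement 6, if `R(z⋆) = 0`, the segment `[z⋆, z] ⊆ K`, and `R'(z) p = -R(z)`,
then `‖z + p - z⋆‖ ≤ (γ/(2μ))‖z - z⋆‖²`. -/
theorem stmt7 {E : Type*} [NormedAddCommGroup E] [NormedSpace ℝ E] [CompleteSpace E]
    (K : Set E) (hK : Convex ℝ K)
    (R : E → E) (R' : E → E →L[ℝ] E)
    (hderiv : ∀ x ∈ K, HasFDerivAt R (R' x) x)
    (γ : ℝ) (hγ : 0 ≤ γ)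
    (hLip : ∀ x ∈ K, ∀ y ∈ K, ‖R' x - R' y‖ ≤ γ * ‖x - y‖)
    (μ : ℝ) (hμ : 0 < μ)
    (hlower : ∀ x ∈ K, ∀ ξ : E, μ * ‖ξ‖ ≤ ‖R' x ξ‖)
    (zs : E) (hzs : zs ∈ K) (hzero : R zs = 0)
    (z : E) (hz : z ∈ K)
    (hseg : ∀ θ ∈ Set.Icc (0 : ℝ) 1, zs + θ • (z - zs) ∈ K)
    (p : E) (hp : R' z p = -R z) :
    ‖z + p - zs‖ ≤ γ / (2 * μ) * ‖z - zs‖ ^ 2 := by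
  set v : E := zs - z with hv
  set c : E := R' z v with hc
  set g : ℝ → E := fun t => R (z + t • v) - t • c - R z with hg
  have hmem : ∀ t ∈ Set.Icc (0 : ℝ) 1, z + t • v ∈ K := by
    intro t ht
    have h1t : (1 - t) ∈ Set.Icc (0 : ℝ) 1 := ⟨by linarith [ht.2], by linarith [ht.1]⟩
    have := hseg (1 - t) h1t
    have heq : zs + (1 - t) • (z - zs) = z + t • v := by
      simp only [hv, sub_smul, one_smul, smul_sub]
      abel
    rwa [heq] at this
  have hgdiff : ∀ t ∈ Set.Icc (0 : ℝ) 1,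
      HasDerivAt g (R' (z + t • v) v - c) t := by
    intro t ht
    have hpt : HasDerivAt (fun s : ℝ => z + s • v) v t := by
      simpa using ((hasDerivAt_id t).smul_const v).const_add z
    have h1 : HasDerivAt (fun s : ℝ => R (z + s • v)) (R' (z + t • v) v) t :=
      (hderiv _ (hmem t ht)).comp_hasDerivAt t hpt
    have h2 : HasDerivAt (fun s : ℝ => s • c) c t := by
      simpa using (hasDerivAt_id t).smul_const c
    simpa [hg] using (h1.sub h2).sub_const (R z)
  -- bound the derivative
  have hbound : ∀ t ∈ Set.Ico (0 : ℝ) 1,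
      ‖R' (z + t • v) v - c‖ ≤ (γ * ‖v‖ ^ 2) * t := by
    intro t ht
    have htI : t ∈ Set.Icc (0 : ℝ) 1 := ⟨ht.1, le_of_lt ht.2⟩
    have hx : z + t • v ∈ K := hmem t htI
    have : ‖R' (z + t • v) v - c‖ = ‖(R' (z + t • v) - R' z) v‖ := by
      simp [hc, ContinuousLinearMap.sub_apply]
    rw [this]
    calc ‖(R' (z + t • v) - R' z) v‖ ≤ ‖R' (z + t • v) - R' z‖ * ‖v‖ :=
          (R' (z + t • v) - R' z).le_opNorm v
      _ ≤ (γ * ‖z + t • v - z‖) * ‖v‖ := by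
          have := hLip _ hx z hz
          exact mul_le_mul_of_nonneg_right this (norm_nonneg v)
      _ = (γ * ‖v‖ ^ 2) * t := by
          have : ‖z + t • v - z‖ = t * ‖v‖ := by
            rw [add_sub_cancel_left, norm_smul, Real.norm_eq_abs, abs_of_nonneg ht.1]
          rw [this]; ring
  -- fencing lemma
  have key : ‖g 1‖ ≤ γ / 2 * ‖v‖ ^ 2 := by
    have hB : ∀ x : ℝ, HasDerivAt (fun t => γ / 2 * ‖v‖ ^ 2 * t ^ 2)
        ((γ * ‖v‖ ^ 2) * x) x := by
      intro x
      have := (hasDerivAt_pow 2 x).const_mul (γ / 2 * ‖v‖ ^ 2)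
      exact this.congr_deriv (by rw [show (2:ℕ) - 1 = 1 from rfl]; push_cast; ring)
    have ha : ‖g 0‖ ≤ γ / 2 * ‖v‖ ^ 2 * (0 : ℝ) ^ 2 := by simp [hg]
    have := image_norm_le_of_norm_deriv_right_le_deriv_boundary
      (f := g) (f' := fun t => R' (z + t • v) v - c) (a := 0) (b := 1)
      (fun t ht => (hgdiff t ht).continuousAt.continuousWithinAt)
      (fun t ht => (hgdiff t ⟨ht.1, le_of_lt ht.2⟩).hasDerivWithinAt)
      ha hB hbound (Set.right_mem_Icc.2 zero_le_one)
    simpa using this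
  -- identify g 1
  have hg1 : g 1 = R' z (z + p - zs) := by
    have e1 : g 1 = R zs - c - R z := by
      simp only [hg, one_smul]
      rw [show z + v = zs by rw [hv]; abel]
    have e2 : R' z (z + p - zs) = -c - R z := by
      have : z + p - zs = p - v := by rw [hv]; abel
      rw [this, map_sub, hp, hc]; abel
    rw [e1, e2, hzero]; abel
  have hlow := hlower z hz (z + p - zs)
  rw [← hg1] at hlow
  have hvnorm : ‖v‖ = ‖z - zs‖ := norm_sub_rev _ _
  have : μ * ‖z + p - zs‖ ≤ γ / 2 * ‖z - zs‖ ^ 2 := by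
    calc μ * ‖z + p - zs‖ ≤ ‖g 1‖ := hlow
      _ ≤ γ / 2 * ‖v‖ ^ 2 := key
      _ = γ / 2 * ‖z - zs‖ ^ 2 := by rw [hvnorm]
  rw [div_mul_eq_mul_div, le_div_iff₀ (by positivity : (0:ℝ) < 2 * μ)]
  nlinarith [this]
end

section
/- Let D be a nonempty closed convex subset of E = EuclideanSpace ℝ (Fin n) and let π : E → E be the metric projection onto D, i.e. π(x) ∈ D and ‖x − π(x)‖ ≤ ‖x − d‖ for all d ∈ D and all x. Let z ∈ E with z ∉ D, and suppose π has a Fréchet derivative J at z (a continuous linear map E →L[ℝ] E) which is symmetric: ⟨J u, v⟩ = ⟨u, J v⟩ for all u, v. Then every eigenvalue of J lies in [0,1]: if v ≠ 0 and J v = λ • v for some λ ∈ ℝ, then 0 ≤ λ and λ ≤ 1. -/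
open RealInnerProductSpace

/-- eigenvalues of a symmetric Jacobian of a metric projection onto a
nonempty closed convex set, at a point outside the set, lie in `[0,1]`. -/
theorem stmt8 {n : ℕ} (D : Set (EuclideanSpace ℝ (Fin n)))
    (hDne : D.Nonempty) (hDclosed : IsClosed D) (hDconv : Convex ℝ D)
    (proj : EuclideanSpace ℝ (Fin n) → EuclideanSpace ℝ (Fin n))
    (hproj : ∀ x, proj x ∈ D ∧ ∀ d ∈ D, ‖x - proj x‖ ≤ ‖x - d‖)
    (z : EuclideanSpace ℝ (Fin n)) (hz : z ∉ D)
    (J : EuclideanSpace ℝ (Fin n) →L[ℝ] EuclideanSpace ℝ (Fin n))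
    (hJ : HasFDerivAt proj J z)
    (hsymm : ∀ u v : EuclideanSpace ℝ (Fin n), ⟪J u, v⟫ = ⟪u, J v⟫)
    (lam : ℝ) (v : EuclideanSpace ℝ (Fin n)) (hv : v ≠ 0)
    (heig : J v = lam • v) :
    0 ≤ lam ∧ lam ≤ 1 := by
  -- variational inequality
  have hVI : ∀ x, ∀ d ∈ D, ⟪x - proj x, d - proj x⟫ ≤ 0 := by
    intro x
    haveI : Nonempty ↑D := hDne.to_subtype
    have hinf : ‖x - proj x‖ = ⨅ w : D, ‖x - (w : EuclideanSpace ℝ (Fin n))‖ := by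
      refine le_antisymm (le_ciInf fun w => (hproj x).2 w w.2) ?_
      exact ciInf_le ⟨0, fun a ⟨w, hw⟩ => hw ▸ norm_nonneg _⟩
        (⟨proj x, (hproj x).1⟩ : D)
    exact (norm_eq_iInf_iff_real_inner_le_zero hDconv (hproj x).1).1 hinf
  -- firm nonexpansiveness
  have hfirm : ∀ x y, ‖proj x - proj y‖ ^ 2 ≤ ⟪x - y, proj x - proj y⟫ := by
    intro x y
    have h1 := hVI x (proj y) (hproj y).1
    have h2 := hVI y (proj x) (hproj x).1
    have hn : ‖proj x - proj y‖ ^ 2 = ⟪proj x - proj y, proj x - proj y⟫ :=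
      (real_inner_self_eq_norm_sq _).symm
    rw [hn]
    have e0 : proj y - proj x = -(proj x - proj y) := by abel
    rw [e0, inner_neg_right] at h1
    have key : ⟪x - y, proj x - proj y⟫ - ⟪proj x - proj y, proj x - proj y⟫
        = ⟪x - proj x, proj x - proj y⟫ - ⟪y - proj y, proj x - proj y⟫ := by
      rw [← inner_sub_left, ← inner_sub_left]
      congr 1
      abel
    linarith
  -- derivative along the line t ↦ z + t • v
  set f : ℝ → EuclideanSpace ℝ (Fin n) := fun t => proj (z + t • v) with hf
  have hline : HasDerivAt (fun t : ℝ => z + t • v) v 0 := by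
    simpa using ((hasDerivAt_id (0:ℝ)).smul_const v).const_add z
  have hcomp : HasDerivAt f (J v) 0 := by
    have hJ' : HasFDerivAt proj J (z + (0:ℝ) • v) := by simpa using hJ
    exact hJ'.comp_hasDerivAt 0 hline
  have hslope : Filter.Tendsto (slope f 0) (nhdsWithin 0 {(0:ℝ)}ᶜ) (nhds (J v)) :=
    hasDerivAt_iff_tendsto_slope.1 hcomp
  have hslope' : Filter.Tendsto (slope f 0) (nhdsWithin 0 (Set.Ioi 0)) (nhds (J v)) :=
    hslope.mono_left (nhdsWithin_mono _ (fun t ht => ne_of_gt ht))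
  -- key inequality: ‖J v‖² ≤ ⟪v, J v⟫
  have hkey : ‖J v‖ ^ 2 ≤ ⟪v, J v⟫ := by
    have htend : Filter.Tendsto (fun t : ℝ => ⟪v, slope f 0 t⟫ - ‖slope f 0 t‖ ^ 2)
        (nhdsWithin 0 (Set.Ioi 0)) (nhds (⟪v, J v⟫ - ‖J v‖ ^ 2)) := by
      exact ((Filter.Tendsto.inner tendsto_const_nhds hslope')).sub
        ((hslope'.norm.pow 2))
    have hev : ∀ᶠ t in nhdsWithin 0 (Set.Ioi 0),
        0 ≤ ⟪v, slope f 0 t⟫ - ‖slope f 0 t‖ ^ 2 := by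
      filter_upwards [self_mem_nhdsWithin] with t ht
      have ht0 : (0:ℝ) < t := ht
      have hfir := hfirm (z + t • v) z
      have hsub : z + t • v - z = t • v := by abel
      rw [hsub] at hfir
      have hslope_eq : slope f 0 t = t⁻¹ • (f t - f 0) := by
        rw [slope_def_module]; ring_nf
      have hf0 : f 0 = proj z := by simp [hf]
      have hft : f t = proj (z + t • v) := rfl
      rw [hslope_eq, hf0]
      have hnorm : ‖t⁻¹ • (proj (z + t • v) - proj z)‖ ^ 2
          = t⁻¹ ^ 2 * ‖proj (z + t • v) - proj z‖ ^ 2 := by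
        rw [norm_smul, mul_pow, Real.norm_eq_abs, abs_of_pos (inv_pos.2 ht0)]
      have hinner : ⟪v, t⁻¹ • (proj (z + t • v) - proj z)⟫
          = t⁻¹ * ⟪v, proj (z + t • v) - proj z⟫ := real_inner_smul_right _ _ _
      have hsmul : ⟪t • v, proj (z + t • v) - proj z⟫
          = t * ⟪v, proj (z + t • v) - proj z⟫ := real_inner_smul_left _ _ _
      rw [hft, hnorm, hinner]
      rw [hsmul] at hfir
      have h2 : ‖proj (z + t • v) - proj z‖ ^ 2 ≤ t * ⟪v, proj (z + t • v) - proj z⟫ := hfir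
      have hti : (0:ℝ) ≤ t⁻¹ ^ 2 := by positivity
      have h3 := mul_le_mul_of_nonneg_left h2 hti
      have h4 : t⁻¹ ^ 2 * (t * ⟪v, proj (z + t • v) - proj z⟫)
          = t⁻¹ * ⟪v, proj (z + t • v) - proj z⟫ := by
        field_simp
      linarith
    haveI : (nhdsWithin (0:ℝ) (Set.Ioi 0)).NeBot := nhdsGT_neBot 0
    have : (0:ℝ) ≤ ⟪v, J v⟫ - ‖J v‖ ^ 2 := ge_of_tendsto htend hev
    linarith
  -- conclude from eigenvalue equation
  have hvnorm : (0:ℝ) < ‖v‖ ^ 2 := by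
    have : ‖v‖ ≠ 0 := norm_ne_zero_iff.mpr hv
    positivity
  have hJvnorm : ‖J v‖ ^ 2 = lam ^ 2 * ‖v‖ ^ 2 := by
    rw [heig, norm_smul, mul_pow, Real.norm_eq_abs, sq_abs]
  have hinner : ⟪v, J v⟫ = lam * ‖v‖ ^ 2 := by
    rw [heig, real_inner_smul_right, real_inner_self_eq_norm_sq]
  rw [hJvnorm, hinner] at hkey
  have hq : lam ^ 2 ≤ lam := by
    have := (mul_le_mul_iff_of_pos_right hvnorm).mpr (le_refl lam)
    nlinarith [hkey, hvnorm]
  exact ⟨by nlinarith [sq_nonneg lam], by nlinarith [sq_nonneg (lam - 1)]⟩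
end

section
/- Fix n m : ℕ. Let D ⊆ EuclideanSpace ℝ (Fin n) be a nonempty closed convex set, K ⊆ EuclideanSpace ℝ (Fin m) a nonempty closed convex cone, and K° = {w | ∀ u ∈ K, ⟨w, u⟩ ≤ 0} its polar cone. Let P be a real n×n matrix, H a real m×n matrix, q ∈ ℝⁿ, g ∈ ℝᵐ, and α, β > 0. Let z, w be given, z⁺ = π_D(z − α(Pz + q + Hᵀw)) and w⁺ = π_{K°}(w + β(H(2z⁺ − z) − g)), and suppose ‖z⁺ − z‖ ≤ ε and ‖w⁺ − w‖ ≤ ε for some ε > 0. Then z⁺ ∈ D and there exists a vector ν with ⟨ν, d − z⁺⟩ ≤ 0 for all d ∈ D such that ‖(−(P z⁺ + q + Hᵀ w⁺)) − ν‖ ≤ (1/α + ‖P‖ + ‖Hᵀ‖) ε. -/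
open Matrix RealInnerProductSpace
set_option maxHeartbeats 1000000

lemma l2OpNorm_bound {m n : ℕ} (A : Matrix (Fin m) (Fin n) ℝ)
    (x : EuclideanSpace ℝ (Fin n)) :
    ‖Matrix.toEuclideanLin A x‖ ≤ l2OpNorm A * ‖x‖ := by
  have := (Matrix.toEuclideanLin A).toContinuousLinearMap.le_opNorm x
  simpa [l2OpNorm] using this

/-- primal KKT residual bound from the PIPG step.  If consecutive PIPG
iterates move by at most `ε`, then `z⁺ ∈ D` and `-(P z⁺ + q + Hᵀ w⁺)` is within
`(1/α + ‖P‖ + ‖Hᵀ‖)ε` of the normal cone of `D` at `z⁺`. -/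
theorem stmt12 {n m : ℕ}
    (D : Set (EuclideanSpace ℝ (Fin n)))
    (hDne : D.Nonempty) (hDclosed : IsClosed D) (hDconv : Convex ℝ D)
    (K : Set (EuclideanSpace ℝ (Fin m)))
    (hK0 : (0 : EuclideanSpace ℝ (Fin m)) ∈ K)
    (hKadd : ∀ u ∈ K, ∀ v ∈ K, u + v ∈ K)
    (hKsmul : ∀ c : ℝ, 0 ≤ c → ∀ u ∈ K, c • u ∈ K)
    (hKclosed : IsClosed K)
    (projD : EuclideanSpace ℝ (Fin n) → EuclideanSpace ℝ (Fin n))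
    (hprojD : ∀ x, projD x ∈ D ∧ ∀ d ∈ D, ‖x - projD x‖ ≤ ‖x - d‖)
    (projKp : EuclideanSpace ℝ (Fin m) → EuclideanSpace ℝ (Fin m))
    (hprojKp : ∀ x, (∀ u ∈ K, ⟪projKp x, u⟫ ≤ 0) ∧
      ∀ d : EuclideanSpace ℝ (Fin m), (∀ u ∈ K, ⟪d, u⟫ ≤ 0) → ‖x - projKp x‖ ≤ ‖x - d‖)
    (P : Matrix (Fin n) (Fin n) ℝ) (H : Matrix (Fin m) (Fin n) ℝ)
    (q : EuclideanSpace ℝ (Fin n)) (g : EuclideanSpace ℝ (Fin m))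
    (α β : ℝ) (hα : 0 < α) (hβ : 0 < β)
    (z zp : EuclideanSpace ℝ (Fin n)) (w wp : EuclideanSpace ℝ (Fin m))
    (hzp : zp = projD (z - α • (Matrix.toEuclideanLin P z + q + Matrix.toEuclideanLin Hᵀ w)))
    (hwp : wp = projKp (w + β • (Matrix.toEuclideanLin H ((2 : ℝ) • zp - z) - g)))
    (ε : ℝ) (hε : 0 < ε)
    (hzε : ‖zp - z‖ ≤ ε) (hwε : ‖wp - w‖ ≤ ε) :
    zp ∈ D ∧ ∃ ν : EuclideanSpace ℝ (Fin n),
      (∀ d ∈ D, ⟪ν, d - zp⟫ ≤ 0) ∧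
      ‖(-(Matrix.toEuclideanLin P zp + q + Matrix.toEuclideanLin Hᵀ wp)) - ν‖ ≤
        (1 / α + l2OpNorm P + l2OpNorm Hᵀ) * ε := by
  set x := z - α • (Matrix.toEuclideanLin P z + q + Matrix.toEuclideanLin Hᵀ w) with hx
  have hzpD : zp ∈ D := hzp ▸ (hprojD x).1
  refine ⟨hzpD, ?_⟩
  -- normal cone property
  haveI : Nonempty D := ⟨⟨zp, hzpD⟩⟩
  have hb : BddBelow (Set.range fun d : D => ‖x - (d : EuclideanSpace ℝ (Fin n))‖) := by
    refine ⟨0, ?_⟩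
    rintro _ ⟨d, rfl⟩
    exact norm_nonneg _
  have hinf : ‖x - zp‖ = ⨅ d : D, ‖x - d‖ := by
    refine le_antisymm (le_ciInf fun d => by rw [hzp]; exact (hprojD x).2 d d.2) ?_
    have := ciInf_le hb (⟨zp, hzpD⟩ : D)
    simpa using this
  have hnc : ∀ d ∈ D, ⟪x - zp, d - zp⟫ ≤ 0 :=
    (norm_eq_iInf_iff_real_inner_le_zero hDconv hzpD).mp hinf
  refine ⟨(1 / α) • (x - zp), fun d hd => ?_, ?_⟩
  · rw [real_inner_smul_left]
    exact mul_nonpos_of_nonneg_of_nonpos (by positivity) (hnc d hd)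
  · have hkey : (-(Matrix.toEuclideanLin P zp + q + Matrix.toEuclideanLin Hᵀ wp))
        - (1 / α) • (x - zp)
        = Matrix.toEuclideanLin P (z - zp) + Matrix.toEuclideanLin Hᵀ (w - wp)
          + (1 / α) • (zp - z) := by
      rw [hx, map_sub, map_sub]
      have hα' : (α : ℝ) ≠ 0 := ne_of_gt hα
      rw [smul_sub, smul_sub, smul_smul, one_div_mul_cancel hα', one_smul]
      module
    rw [hkey]
    have h1 : ‖Matrix.toEuclideanLin P (z - zp)‖ ≤ l2OpNorm P * ε := by
      calc ‖Matrix.toEuclideanLin P (z - zp)‖ ≤ l2OpNorm P * ‖z - zp‖ := l2OpNorm_bound P _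
        _ ≤ l2OpNorm P * ε := by
            have : ‖z - zp‖ = ‖zp - z‖ := norm_sub_rev _ _
            have hnn : 0 ≤ l2OpNorm P := norm_nonneg _
            nlinarith
    have h2 : ‖Matrix.toEuclideanLin Hᵀ (w - wp)‖ ≤ l2OpNorm Hᵀ * ε := by
      calc ‖Matrix.toEuclideanLin Hᵀ (w - wp)‖ ≤ l2OpNorm Hᵀ * ‖w - wp‖ := l2OpNorm_bound _ _
        _ ≤ l2OpNorm Hᵀ * ε := by
            have : ‖w - wp‖ = ‖wp - w‖ := norm_sub_rev _ _
            have hnn : 0 ≤ l2OpNorm Hᵀ := norm_nonneg _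
            nlinarith
    have h3 : ‖(1 / α) • (zp - z)‖ ≤ (1 / α) * ε := by
      rw [norm_smul, Real.norm_eq_abs, abs_of_pos (by positivity)]
      have : 0 < 1 / α := by positivity
      nlinarith
    calc ‖Matrix.toEuclideanLin P (z - zp) + Matrix.toEuclideanLin Hᵀ (w - wp)
          + (1 / α) • (zp - z)‖
        ≤ ‖Matrix.toEuclideanLin P (z - zp) + Matrix.toEuclideanLin Hᵀ (w - wp)‖
          + ‖(1 / α) • (zp - z)‖ := norm_add_le _ _
      _ ≤ ‖Matrix.toEuclideanLin P (z - zp)‖ + ‖Matrix.toEuclideanLin Hᵀ (w - wp)‖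
          + ‖(1 / α) • (zp - z)‖ := by linarith [norm_add_le (Matrix.toEuclideanLin P (z - zp)) (Matrix.toEuclideanLin Hᵀ (w - wp))]
      _ ≤ l2OpNorm P * ε + l2OpNorm Hᵀ * ε + (1 / α) * ε := by linarith
      _ = (1 / α + l2OpNorm P + l2OpNorm Hᵀ) * ε := by ring
end

section
/- Fix n m : ℕ. Let D ⊆ EuclideanSpace ℝ (Fin n) be a nonempty closed convex set, K ⊆ EuclideanSpace ℝ (Fin m) a nonempty closed convex cone, and K° = {w | ∀ u ∈ K, ⟨w, u⟩ ≤ 0} its polar cone. Let P be a real n×n matrix, H a real m×n matrix, q ∈ ℝⁿ, g ∈ ℝᵐ, and α, β > 0. Let z, w be given, z⁺ = π_D(z − α(Pz + q + Hᵀw)) and w⁺ = π_{K°}(w + β(H(2z⁺ − z) − g)), and suppose ‖z⁺ − z‖ ≤ ε and ‖w⁺ − w‖ ≤ ε for some ε > 0. Then w⁺ ∈ K° and there exists a vector ν with ⟨ν, u − w⁺⟩ ≤ 0 for all u ∈ K° such that ‖(H z⁺ − g) − ν‖ ≤ (1/β + ‖H‖) ε. -/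
open Matrix RealInnerProductSpace

/-- dual KKT residual bound from the PIPG step.  If consecutive PIPG
iterates move by at most `ε`, then `w⁺ ∈ K°` and `H z⁺ - g` is within
`(1/β + ‖H‖)ε` of the normal cone of `K°` at `w⁺`. -/
theorem stmt13 {n m : ℕ}
    (D : Set (EuclideanSpace ℝ (Fin n)))
    (hDne : D.Nonempty) (hDclosed : IsClosed D) (hDconv : Convex ℝ D)
    (K : Set (EuclideanSpace ℝ (Fin m)))
    (hK0 : (0 : EuclideanSpace ℝ (Fin m)) ∈ K)
    (hKadd : ∀ u ∈ K, ∀ v ∈ K, u + v ∈ K)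
    (hKsmul : ∀ c : ℝ, 0 ≤ c → ∀ u ∈ K, c • u ∈ K)
    (hKclosed : IsClosed K)
    (projD : EuclideanSpace ℝ (Fin n) → EuclideanSpace ℝ (Fin n))
    (hprojD : ∀ x, projD x ∈ D ∧ ∀ d ∈ D, ‖x - projD x‖ ≤ ‖x - d‖)
    (projKp : EuclideanSpace ℝ (Fin m) → EuclideanSpace ℝ (Fin m))
    (hprojKp : ∀ x, (∀ u ∈ K, ⟪projKp x, u⟫ ≤ 0) ∧
      ∀ d : EuclideanSpace ℝ (Fin m), (∀ u ∈ K, ⟪d, u⟫ ≤ 0) → ‖x - projKp x‖ ≤ ‖x - d‖)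
    (P : Matrix (Fin n) (Fin n) ℝ) (H : Matrix (Fin m) (Fin n) ℝ)
    (q : EuclideanSpace ℝ (Fin n)) (g : EuclideanSpace ℝ (Fin m))
    (α β : ℝ) (hα : 0 < α) (hβ : 0 < β)
    (z zp : EuclideanSpace ℝ (Fin n)) (w wp : EuclideanSpace ℝ (Fin m))
    (hzp : zp = projD (z - α • (Matrix.toEuclideanLin P z + q + Matrix.toEuclideanLin Hᵀ w)))
    (hwp : wp = projKp (w + β • (Matrix.toEuclideanLin H ((2 : ℝ) • zp - z) - g)))
    (ε : ℝ) (hε : 0 < ε)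
    (hzε : ‖zp - z‖ ≤ ε) (hwε : ‖wp - w‖ ≤ ε) :
    (∀ u ∈ K, ⟪wp, u⟫ ≤ 0) ∧ ∃ ν : EuclideanSpace ℝ (Fin m),
      (∀ d : EuclideanSpace ℝ (Fin m), (∀ u ∈ K, ⟪d, u⟫ ≤ 0) → ⟪ν, d - wp⟫ ≤ 0) ∧
      ‖(Matrix.toEuclideanLin H zp - g) - ν‖ ≤ (1 / β + l2OpNorm H) * ε := by
  classical
  set L := Matrix.toEuclideanLin H with hL
  set x := w + β • (L ((2 : ℝ) • zp - z) - g) with hx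
  set S : Set (EuclideanSpace ℝ (Fin m)) := {d | ∀ u ∈ K, ⟪d, u⟫ ≤ 0} with hS
  have hSconv : Convex ℝ S := by
    intro a ha b hb s t hs ht hst
    intro u hu
    have := ha u hu
    have := hb u hu
    simp only [inner_add_left, real_inner_smul_left]
    nlinarith [ha u hu, hb u hu]
  have hwpS : wp ∈ S := by
    rw [hwp]; exact (hprojKp x).1
  have hmin : ∀ d ∈ S, ‖x - wp‖ ≤ ‖x - d‖ := by
    intro d hd
    rw [hwp]; exact (hprojKp x).2 d hd
  -- variational inequality
  have hVI : ∀ d ∈ S, ⟪x - wp, d - wp⟫ ≤ 0 := by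
    have hiInf : ‖x - wp‖ = ⨅ d : S, ‖x - d‖ := by
      haveI : Nonempty S := ⟨⟨wp, hwpS⟩⟩
      refine le_antisymm (le_ciInf fun d => hmin d d.2) ?_
      exact ciInf_le ⟨0, fun _ ⟨d, h⟩ => h ▸ norm_nonneg _⟩ (⟨wp, hwpS⟩ : S)
    exact (norm_eq_iInf_iff_real_inner_le_zero hSconv hwpS).1 hiInf
  refine ⟨hwpS, β⁻¹ • (x - wp), ?_, ?_⟩
  · intro d hd
    have := hVI d hd
    rw [real_inner_smul_left]
    have : β⁻¹ * ⟪x - wp, d - wp⟫ ≤ 0 :=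
      mul_nonpos_of_nonneg_of_nonpos (le_of_lt (inv_pos.2 hβ)) this
    exact this
  · have hrw : (L zp - g) - β⁻¹ • (x - wp) = L (z - zp) + β⁻¹ • (wp - w) := by
      have hLr : L ((2 : ℝ) • zp - z) = (2 : ℝ) • L zp - L z := by
        rw [map_sub, LinearMap.map_smul]
      have hβ' : β ≠ 0 := ne_of_gt hβ
      rw [hx, hLr, map_sub]
      match_scalars <;> field_simp <;> ring
    rw [hrw]
    have h1 : ‖L (z - zp)‖ ≤ l2OpNorm H * ε := by
      have := (Matrix.toEuclideanLin H).toContinuousLinearMap.le_opNorm (z - zp)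
      have hn : ‖z - zp‖ ≤ ε := by rwa [norm_sub_rev]
      calc ‖L (z - zp)‖ ≤ l2OpNorm H * ‖z - zp‖ := this
        _ ≤ l2OpNorm H * ε := by
            exact mul_le_mul_of_nonneg_left hn (norm_nonneg _)
    have h2 : ‖β⁻¹ • (wp - w)‖ ≤ (1 / β) * ε := by
      rw [norm_smul, Real.norm_eq_abs, abs_of_pos (inv_pos.2 hβ), one_div]
      exact mul_le_mul_of_nonneg_left hwε (le_of_lt (inv_pos.2 hβ))
    calc ‖L (z - zp) + β⁻¹ • (wp - w)‖ ≤ ‖L (z - zp)‖ + ‖β⁻¹ • (wp - w)‖ :=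
          norm_add_le _ _
      _ ≤ l2OpNorm H * ε + (1 / β) * ε := add_le_add h1 h2
      _ = (1 / β + l2OpNorm H) * ε := by ring
end

section
/- Fix n m : ℕ. Let D ⊆ EuclideanSpace ℝ (Fin n) be a convex set, K ⊆ EuclideanSpace ℝ (Fin m) a set, P a symmetric positive semidefinite real n×n matrix, H a real m×n matrix, q ∈ ℝⁿ, and g ∈ ℝᵐ. Suppose z⋆ ∈ D with H z⋆ − g ∈ K, and w⋆ ∈ ℝᵐ satisfies: ⟨w⋆, u⟩ ≤ 0 for all u ∈ K; ⟨w⋆, H z⋆ − g⟩ = 0; and ⟨P z⋆ + q + Hᵀ w⋆, d − z⋆⟩ ≥ 0 for all d ∈ D. Then z⋆ is optimal for the quadratic program: for every z ∈ D with H z − g ∈ K, (1/2)⟨z⋆, P z⋆⟩ + ⟨q, z⋆⟩ ≤ (1/2)⟨z, P z⟩ + ⟨q, z⟩. -/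
open Matrix RealInnerProductSpace

lemma transpose_inner_aux {n m : ℕ} (H : Matrix (Fin m) (Fin n) ℝ)
    (w : EuclideanSpace ℝ (Fin m)) (x : EuclideanSpace ℝ (Fin n)) :
    ⟪Matrix.toEuclideanLin Hᵀ w, x⟫ = ⟪w, Matrix.toEuclideanLin H x⟫ := by
  rw [← Matrix.conjTranspose_eq_transpose_of_trivial,
    Matrix.toEuclideanLin_conjTranspose_eq_adjoint, LinearMap.adjoint_inner_left]

/-- KKT sufficiency. -/
theorem stmt14 {n m : ℕ}
    (D : Set (EuclideanSpace ℝ (Fin n))) (hDconv : Convex ℝ D)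
    (K : Set (EuclideanSpace ℝ (Fin m)))
    (P : Matrix (Fin n) (Fin n) ℝ) (hPsymm : P.IsSymm)
    (hPpsd : ∀ v : EuclideanSpace ℝ (Fin n), 0 ≤ ⟪v, Matrix.toEuclideanLin P v⟫)
    (H : Matrix (Fin m) (Fin n) ℝ)
    (q : EuclideanSpace ℝ (Fin n)) (g : EuclideanSpace ℝ (Fin m))
    (zs : EuclideanSpace ℝ (Fin n)) (hzs : zs ∈ D)
    (hfeas : Matrix.toEuclideanLin H zs - g ∈ K)
    (ws : EuclideanSpace ℝ (Fin m))
    (hw1 : ∀ u ∈ K, ⟪ws, u⟫ ≤ 0)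
    (hw2 : ⟪ws, Matrix.toEuclideanLin H zs - g⟫ = 0)
    (hw3 : ∀ d ∈ D,
      0 ≤ ⟪Matrix.toEuclideanLin P zs + q + Matrix.toEuclideanLin Hᵀ ws, d - zs⟫) :
    ∀ z ∈ D, Matrix.toEuclideanLin H z - g ∈ K →
      (1 / 2) * ⟪zs, Matrix.toEuclideanLin P zs⟫ + ⟪q, zs⟫ ≤
        (1 / 2) * ⟪z, Matrix.toEuclideanLin P z⟫ + ⟪q, z⟫ := by
  intro z hz hzfeas
  set Pl := Matrix.toEuclideanLin P
  -- symmetry of P as a linear map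
  have hsym : ∀ x y : EuclideanSpace ℝ (Fin n), ⟪Pl x, y⟫ = ⟪x, Pl y⟫ := by
    intro x y
    have h2 : Matrix.toEuclideanLin Pᵀ = LinearMap.adjoint Pl := by
      rw [← Matrix.conjTranspose_eq_transpose_of_trivial]
      exact Matrix.toEuclideanLin_conjTranspose_eq_adjoint P
    have h3 := congrArg Matrix.toEuclideanLin hPsymm
    rw [h2] at h3
    calc ⟪Pl x, y⟫ = ⟪LinearMap.adjoint Pl x, y⟫ := by rw [h3]
      _ = ⟪x, Pl y⟫ := LinearMap.adjoint_inner_left _ _ _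
  -- key inequality from stationarity
  have hstat := hw3 z hz
  -- ⟪Hᵀ ws, z - zs⟫ = ⟪ws, H z - g⟫ - ⟪ws, H zs - g⟫ ≤ 0
  have hHterm : ⟪Matrix.toEuclideanLin Hᵀ ws, z - zs⟫ ≤ 0 := by
    rw [transpose_inner_aux]
    have h1 := hw1 _ hzfeas
    have : Matrix.toEuclideanLin H (z - zs)
        = (Matrix.toEuclideanLin H z - g) - (Matrix.toEuclideanLin H zs - g) := by
      rw [map_sub]; abel
    rw [this, inner_sub_right, hw2]
    linarith
  have hstat2 : 0 ≤ ⟪Pl zs + q, z - zs⟫ := by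
    rw [inner_add_left] at hstat ⊢
    rw [inner_add_left] at hstat
    linarith
  -- PSD gives convexity inequality
  have hpsd := hPpsd (z - zs)
  have hexp : ⟪z - zs, Pl (z - zs)⟫
      = ⟪z, Pl z⟫ - 2 * ⟪zs, Pl z⟫ + ⟪zs, Pl zs⟫ := by
    rw [map_sub, inner_sub_left, inner_sub_right, inner_sub_right]
    have : ⟪z, Pl zs⟫ = ⟪zs, Pl z⟫ := by
      rw [← hsym]; exact real_inner_comm _ _
    rw [this]; ring
  have hlin : ⟪Pl zs + q, z - zs⟫
      = ⟪zs, Pl z⟫ - ⟪zs, Pl zs⟫ + ⟪q, z⟫ - ⟪q, zs⟫ := by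
    rw [inner_add_left, inner_sub_right, inner_sub_right]
    have h1 : ⟪Pl zs, z⟫ = ⟪zs, Pl z⟫ := hsym zs z
    have h2 : ⟪Pl zs, zs⟫ = ⟪zs, Pl zs⟫ := hsym zs zs
    rw [h1, h2]; ring
  rw [hexp] at hpsd
  rw [hlin] at hstat2
  linarith
end

section
/- Fix n m : ℕ. Let D ⊆ EuclideanSpace ℝ (Fin n) be a nonempty closed convex set, K ⊆ EuclideanSpace ℝ (Fin m) a nonempty closed convex cone, and K° = {w | ∀ u ∈ K, ⟨w, u⟩ ≤ 0} its polar cone. Let P be a symmetric positive semidefinite real n×n matrix, H a real m×n matrix, q ∈ ℝⁿ, g ∈ ℝᵐ, and α, β > 0. Suppose (z⋆, w⋆) is a fixed point of the PIPG operator: z⋆ = π_D(z⋆ − α(P z⋆ + q + Hᵀ w⋆)) and w⋆ = π_{K°}(w⋆ + β(H z⋆ − g)). Then z⋆ ∈ D, H z⋆ − g ∈ K, and z⋆ is optimal: for every z ∈ D with H z − g ∈ K, (1/2)⟨z⋆, P z⋆⟩ + ⟨q, z⋆⟩ ≤ (1/2)⟨z, P z⟩ + ⟨q, z⟩. -/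
open Matrix RealInnerProductSpace

/-- Variational inequality for a metric projection onto a convex set. -/
lemma proj_vi {E : Type*} [NormedAddCommGroup E] [InnerProductSpace ℝ E]
    {C : Set E} (hC : Convex ℝ C) {x p : E} (hp : p ∈ C)
    (hmin : ∀ d ∈ C, ‖x - p‖ ≤ ‖x - d‖) :
    ∀ d ∈ C, ⟪x - p, d - p⟫ ≤ 0 := by
  haveI : Nonempty C := ⟨⟨p, hp⟩⟩
  have hbdd : BddBelow (Set.range fun w : C => ‖x - (w : E)‖) := by
    refine ⟨0, ?_⟩
    rintro r ⟨w, rfl⟩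
    exact norm_nonneg _
  have h : ‖x - p‖ = ⨅ w : C, ‖x - w‖ :=
    le_antisymm (le_ciInf fun w => hmin w w.2) (ciInf_le hbdd ⟨p, hp⟩)
  exact (norm_eq_iInf_iff_real_inner_le_zero hC hp).1 h

/-- any fixed point `(z⋆, w⋆)` of the PIPG operator gives a feasible
point `z⋆ ∈ D` with `H z⋆ - g ∈ K` that is optimal for the quadratic program. -/
theorem stmt15 {n m : ℕ}
    (D : Set (EuclideanSpace ℝ (Fin n)))
    (hDne : D.Nonempty) (hDclosed : IsClosed D) (hDconv : Convex ℝ D)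
    (K : Set (EuclideanSpace ℝ (Fin m)))
    (hK0 : (0 : EuclideanSpace ℝ (Fin m)) ∈ K)
    (hKadd : ∀ u ∈ K, ∀ v ∈ K, u + v ∈ K)
    (hKsmul : ∀ c : ℝ, 0 ≤ c → ∀ u ∈ K, c • u ∈ K)
    (hKclosed : IsClosed K)
    (projD : EuclideanSpace ℝ (Fin n) → EuclideanSpace ℝ (Fin n))
    (hprojD : ∀ x, projD x ∈ D ∧ ∀ d ∈ D, ‖x - projD x‖ ≤ ‖x - d‖)
    (projKp : EuclideanSpace ℝ (Fin m) → EuclideanSpace ℝ (Fin m))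
    (hprojKp : ∀ x, (∀ u ∈ K, ⟪projKp x, u⟫ ≤ 0) ∧
      ∀ d : EuclideanSpace ℝ (Fin m), (∀ u ∈ K, ⟪d, u⟫ ≤ 0) → ‖x - projKp x‖ ≤ ‖x - d‖)
    (P : Matrix (Fin n) (Fin n) ℝ) (hPsymm : P.IsSymm)
    (hPpsd : ∀ v : EuclideanSpace ℝ (Fin n), 0 ≤ ⟪v, Matrix.toEuclideanLin P v⟫)
    (H : Matrix (Fin m) (Fin n) ℝ)
    (q : EuclideanSpace ℝ (Fin n)) (g : EuclideanSpace ℝ (Fin m))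
    (α β : ℝ) (hα : 0 < α) (hβ : 0 < β)
    (zs : EuclideanSpace ℝ (Fin n)) (ws : EuclideanSpace ℝ (Fin m))
    (hfixz : zs = projD (zs - α • (Matrix.toEuclideanLin P zs + q +
      Matrix.toEuclideanLin Hᵀ ws)))
    (hfixw : ws = projKp (ws + β • (Matrix.toEuclideanLin H zs - g))) :
    zs ∈ D ∧ Matrix.toEuclideanLin H zs - g ∈ K ∧
      ∀ z ∈ D, Matrix.toEuclideanLin H z - g ∈ K →
        (1 / 2) * ⟪zs, Matrix.toEuclideanLin P zs⟫ + ⟪q, zs⟫ ≤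
          (1 / 2) * ⟪z, Matrix.toEuclideanLin P z⟫ + ⟪q, z⟫ := by
  classical
  set Pl := Matrix.toEuclideanLin P with hPl
  set Hl := Matrix.toEuclideanLin H with hHl
  set Htl := Matrix.toEuclideanLin Hᵀ with hHtl
  -- the polar cone as a set
  set Kp : Set (EuclideanSpace ℝ (Fin m)) := {w | ∀ u ∈ K, ⟪w, u⟫ ≤ 0} with hKp
  have hKpconv : Convex ℝ Kp := by
    intro w1 h1 w2 h2 a b ha hb hab
    intro u hu
    have := h1 u hu
    have := h2 u hu
    simp only [inner_add_left, real_inner_smul_left]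
    nlinarith
  -- zs ∈ D
  have hzsD : zs ∈ D := hfixz ▸ (hprojD _).1
  -- ws ∈ Kp
  have hwsKp : ws ∈ Kp := by rw [hKp]; exact hfixw ▸ (hprojKp _).1
  -- VI for D
  have hviD : ∀ d ∈ D, ⟪Pl zs + q + Htl ws, d - zs⟫ ≥ 0 := by
    intro d hd
    have h := proj_vi hDconv hzsD (fun e he => by
      rw [hfixz]; exact (hprojD _).2 e he) d hd
    have hx : zs - α • (Pl zs + q + Htl ws) - zs = -(α • (Pl zs + q + Htl ws)) := by abel
    rw [hx, inner_neg_left, neg_nonpos, real_inner_smul_left] at h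
    exact (mul_nonneg_iff_of_pos_left hα).1 h
  -- VI for Kp
  have hviK : ∀ d ∈ Kp, ⟪Hl zs - g, d - ws⟫ ≤ 0 := by
    intro d hd
    have h := proj_vi hKpconv hwsKp (fun e he => by
      rw [hfixw]; exact (hprojKp _).2 e he) d hd
    have hx : ws + β • (Hl zs - g) - ws = β • (Hl zs - g) := by abel
    rw [hx, real_inner_smul_left] at h
    exact le_of_mul_le_mul_left (by rw [mul_zero]; exact h) hβ
  -- ⟪Hl zs - g, ws⟫ = 0
  have hKpcone2 : (2 : ℝ) • ws ∈ Kp := by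
    intro u hu
    have := hwsKp u hu
    rw [real_inner_smul_left]; linarith
  have hKp0 : (0 : EuclideanSpace ℝ (Fin m)) ∈ Kp := by
    intro u hu; simp
  have horth : ⟪Hl zs - g, ws⟫ = 0 := by
    have h1 := hviK _ hKpcone2
    have h2 := hviK _ hKp0
    have e1 : (2 : ℝ) • ws - ws = ws := by
      rw [two_smul]; abel
    rw [e1] at h1
    rw [zero_sub, inner_neg_right] at h2
    linarith
  -- feasibility via bipolar theorem
  have hfeas : Hl zs - g ∈ K := by
    by_contra hnot
    let Kc : ProperCone ℝ (EuclideanSpace ℝ (Fin m)) :=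
      { carrier := K
        add_mem' := fun hu hv => hKadd _ hu _ hv
        zero_mem' := hK0
        smul_mem' := by intro c u hu; exact hKsmul c c.2 u hu
        isClosed' := hKclosed }
    obtain ⟨y, hy, hlt⟩ := Kc.hyperplane_separation' (x₀ := Hl zs - g) hnot
    have hyneg : -y ∈ Kp := by
      intro u hu
      have := hy u hu
      rw [inner_neg_left, real_inner_comm]
      linarith
    have := hviK _ hyneg
    rw [inner_sub_right, horth, sub_zero, inner_neg_right] at this
    linarith
  refine ⟨hzsD, hfeas, ?_⟩
  intro z hz hzfeas
  -- adjoint relation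
  have hadj : ∀ (w : EuclideanSpace ℝ (Fin m)) (v : EuclideanSpace ℝ (Fin n)),
      ⟪Htl w, v⟫ = ⟪w, Hl v⟫ := by
    intro w v
    have : Hᵀ = Hᴴ := by
      ext i j; simp [Matrix.conjTranspose_apply]
    rw [hHtl, this, Matrix.toEuclideanLin_conjTranspose_eq_adjoint]
    exact LinearMap.adjoint_inner_left _ _ _
  have hPadj : ∀ (v w : EuclideanSpace ℝ (Fin n)), ⟪Pl v, w⟫ = ⟪v, Pl w⟫ := by
    intro v w
    have hPH : P = Pᴴ := by
      ext i j
      have := congrFun (congrFun hPsymm.symm i) j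
      simpa [Matrix.conjTranspose_apply, Matrix.transpose_apply] using this
    show ⟪Matrix.toEuclideanLin P v, w⟫ = ⟪v, Matrix.toEuclideanLin P w⟫
    conv_lhs => rw [hPH, Matrix.toEuclideanLin_conjTranspose_eq_adjoint]
    exact LinearMap.adjoint_inner_left _ _ _
  -- key inequality : ⟪Pl zs + q, z - zs⟫ ≥ 0
  have h1 := hviD z hz
  have h2 : ⟪Htl ws, z - zs⟫ = ⟪ws, Hl z - g⟫ := by
    rw [hadj, map_sub, inner_sub_right]
    have : ⟪ws, Hl z - g⟫ = ⟪ws, Hl z⟫ - ⟪ws, g⟫ := inner_sub_right _ _ _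
    have horth' : ⟪ws, Hl zs - g⟫ = 0 := by rw [real_inner_comm]; exact horth
    rw [inner_sub_right] at horth'
    rw [this]
    linarith
  have h3 : ⟪ws, Hl z - g⟫ ≤ 0 := hwsKp _ hzfeas
  have hkey : 0 ≤ ⟪Pl zs, z - zs⟫ + ⟪q, z - zs⟫ := by
    have := h1
    rw [inner_add_left, inner_add_left, h2] at this
    linarith
  -- convexity expansion
  have hpsd := hPpsd (z - zs)
  have hexp : ⟪z - zs, Pl (z - zs)⟫ =
      ⟪z, Pl z⟫ + ⟪zs, Pl zs⟫ - 2 * ⟪Pl zs, z⟫ := by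
    rw [map_sub, inner_sub_left, inner_sub_right, inner_sub_right]
    have e1 : ⟪z, Pl zs⟫ = ⟪Pl zs, z⟫ := real_inner_comm _ _
    have e2 : ⟪zs, Pl z⟫ = ⟪Pl zs, z⟫ := by rw [← hPadj, real_inner_comm]
    rw [e1, e2]; ring
  have hk' : 0 ≤ ⟪Pl zs, z⟫ - ⟪Pl zs, zs⟫ + (⟪q, z⟫ - ⟪q, zs⟫) := by
    rw [inner_sub_right, inner_sub_right] at hkey
    linarith
  have hzsPzs : ⟪Pl zs, zs⟫ = ⟪zs, Pl zs⟫ := real_inner_comm _ _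
  rw [hexp] at hpsd
  linarith [hpsd, hk', hzsPzs]
end

section
/- Let E be a real inner product space, T̃ : E → E nonexpansive, λ ∈ (0,1), T x = λ • x + (1 − λ) • T̃ x, and R x = T x − x. Suppose T has a fixed point, and let c ∈ [0,1). Let (z_k) be a sequence in E such that for every k, either z_{k+1} = T z_k or ‖R z_{k+1}‖ ≤ c ‖R z_k‖. Then ‖R z_k‖ → 0 as k → ∞. -/
open Filter

/-- hybrid iteration. If `T̃` is nonexpansive, `λ ∈ (0,1)`,
`T x = λ•x + (1-λ)•T̃ x`, `R x = T x - x`, `T` has a fixed point, `c ∈ [0,1)`,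
and the sequence `z` satisfies at each step either `z_{k+1} = T z_k` or
`‖R z_{k+1}‖ ≤ c‖R z_k‖`, then `‖R z_k‖ → 0`. -/
theorem stmt17 {E : Type*} [NormedAddCommGroup E] [InnerProductSpace ℝ E]
    (T' : E → E) (hT' : ∀ x y : E, ‖T' x - T' y‖ ≤ ‖x - y‖)
    (l : ℝ) (hl0 : 0 < l) (hl1 : l < 1)
    (T R : E → E)
    (hT : ∀ x, T x = l • x + (1 - l) • T' x)
    (hR : ∀ x, R x = T x - x)
    (hfix : ∃ y : E, T y = y)
    (c : ℝ) (hc0 : 0 ≤ c) (hc1 : c < 1)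
    (z : ℕ → E)
    (hz : ∀ k, z (k + 1) = T (z k) ∨ ‖R (z (k + 1))‖ ≤ c * ‖R (z k)‖) :
    Tendsto (fun k : ℕ => ‖R (z k)‖) atTop (nhds 0) := by
  obtain ⟨y, hy⟩ := hfix
  have hl1' : (0:ℝ) < 1 - l := by linarith
  -- T' fixes y
  have hfy' : T' y = y := by
    have h1 : l • y + (1 - l) • T' y = y := by rw [← hT]; exact hy
    have h2 : (1 - l) • T' y = (1 - l) • y := by
      have : (1:ℝ) • y = l • y + (1-l) • y := by module
      rw [one_smul] at this
      calc (1 - l) • T' y = (l • y + (1 - l) • T' y) - l • y := by abel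
        _ = y - l • y := by rw [h1]
        _ = (1 - l) • y := by module
    exact smul_right_injective E (by positivity : (1:ℝ) - l ≠ 0) h2
  -- T is nonexpansive
  have hTne : ∀ x w : E, ‖T x - T w‖ ≤ ‖x - w‖ := by
    intro x w
    have h1 : T x - T w = l • (x - w) + (1 - l) • (T' x - T' w) := by
      rw [hT, hT]; module
    calc ‖T x - T w‖ ≤ ‖l • (x - w)‖ + ‖(1 - l) • (T' x - T' w)‖ := by
          rw [h1]; exact norm_add_le _ _
      _ = l * ‖x - w‖ + (1 - l) * ‖T' x - T' w‖ := by
          rw [norm_smul, norm_smul, Real.norm_eq_abs, Real.norm_eq_abs,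
            abs_of_pos hl0, abs_of_pos hl1']
      _ ≤ l * ‖x - w‖ + (1 - l) * ‖x - w‖ := by
          have := hT' x w; nlinarith
      _ = ‖x - w‖ := by ring
  -- monotonicity of k ↦ ‖R (z k)‖
  have hmono : ∀ k, ‖R (z (k+1))‖ ≤ ‖R (z k)‖ := by
    intro k
    rcases hz k with h | h
    · rw [h, hR, hR]
      have := hTne (T (z k)) (z k)
      calc ‖T (T (z k)) - T (z k)‖ ≤ ‖T (z k) - z k‖ := this
        _ = ‖T (z k) - z k‖ := rfl
    · calc ‖R (z (k+1))‖ ≤ c * ‖R (z k)‖ := h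
        _ ≤ 1 * ‖R (z k)‖ := by
            have := norm_nonneg (R (z k)); nlinarith
        _ = ‖R (z k)‖ := one_mul _
  set a : ℕ → ℝ := fun k => ‖R (z k)‖ with ha
  have hanti : Antitone a := antitone_nat_of_succ_le hmono
  have hbdd : BddBelow (Set.range a) := ⟨0, by rintro _ ⟨k, rfl⟩; exact norm_nonneg _⟩
  have hL : Tendsto a atTop (nhds (⨅ k, a k)) := tendsto_atTop_ciInf hanti hbdd
  set L := ⨅ k, a k with hLdef
  have hLle : ∀ k, L ≤ a k := fun k => ciInf_le hbdd k
  have hL0 : 0 ≤ L := le_ciInf (fun k => norm_nonneg _)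
  suffices hLz : L = 0 by rw [hLz] at hL; exact hL
  by_contra hne
  have hLpos : 0 < L := lt_of_le_of_ne hL0 (Ne.symm hne)
  by_cases hS : ∀ N : ℕ, ∃ k ≥ N, ‖R (z (k+1))‖ ≤ c * ‖R (z k)‖
  · -- contraction steps happen infinitely often
    have hlt : L < L + L * (1 - c) := by nlinarith
    have hev : ∀ᶠ k in atTop, a k < L + L * (1 - c) := hL.eventually_lt_const hlt
    obtain ⟨N, hN⟩ := eventually_atTop.mp hev
    obtain ⟨k, hk, hck⟩ := hS N
    have h1 : a k < L + L * (1 - c) := hN k hk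
    have h2 : L ≤ a (k+1) := hLle (k+1)
    have h3 : a (k+1) ≤ c * a k := hck
    nlinarith
  · -- eventually all steps are T-steps
    push_neg at hS
    obtain ⟨N, hN⟩ := hS
    have hstep : ∀ k ≥ N, z (k+1) = T (z k) := by
      intro k hk
      rcases hz k with h | h
      · exact h
      · exact absurd h (not_le.mpr (hN k hk))
    -- key averaged-map inequality
    have key : ∀ x : E, ‖T x - y‖^2 + (l/(1-l)) * ‖R x‖^2 ≤ ‖x - y‖^2 := by
      intro x
      have h1 : T x - y = l • (x - y) + (1 - l) • (T' x - y) := by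
        rw [hT]; rw [show y = l • y + (1-l) • y by module]; module
      have h2 : R x = (1 - l) • ((T' x - y) - (x - y)) := by
        rw [hR, hT]; module
      set u := x - y with hu
      set v := T' x - y with hv
      have hvu : ‖v‖ ≤ ‖u‖ := by
        have := hT' x y; rw [hfy'] at this; exact this
      rw [h1, h2]
      have e1 : ‖l • u + (1-l) • v‖^2 = l^2 * ‖u‖^2 + 2*(l*(1-l))*(inner ℝ u v) + (1-l)^2 * ‖v‖^2 := by
        rw [norm_add_sq_real, norm_smul, norm_smul, real_inner_smul_left, real_inner_smul_right,
          Real.norm_eq_abs, Real.norm_eq_abs, abs_of_pos hl0, abs_of_pos hl1']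
        try ring
      have e2 : ‖(1-l) • (v - u)‖^2 = (1-l)^2 * (‖v‖^2 - 2*(inner ℝ v u) + ‖u‖^2) := by
        rw [norm_smul, Real.norm_eq_abs, abs_of_pos hl1', mul_pow, norm_sub_sq_real]
        try ring
      have hcomm : (inner ℝ v u) = inner ℝ u v := real_inner_comm u v
      rw [e1, e2]
      rw [hcomm]
      have hdiv : l / (1-l) * ((1-l)^2 * (‖v‖^2 - 2*(inner ℝ u v) + ‖u‖^2))
          = l * (1-l) * (‖v‖^2 - 2*(inner ℝ u v) + ‖u‖^2) := by
        field_simp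
      rw [hdiv]
      have hun : 0 ≤ ‖u‖ := norm_nonneg u
      have hvn : 0 ≤ ‖v‖ := norm_nonneg v
      nlinarith [mul_self_le_mul_self hvn hvu, hl1', hun, hvn, hvu]
    have hKpos : 0 < l / (1 - l) := by positivity
    -- summed inequality
    have hsum : ∀ m : ℕ, ‖z (N+m) - y‖^2 + (l/(1-l)) * (m * L^2) ≤ ‖z N - y‖^2 := by
      intro m
      induction m with
      | zero => simp
      | succ m ih =>
        have hstep' : z (N+m+1) = T (z (N+m)) := hstep (N+m) (Nat.le_add_right N m)
        have hk := key (z (N+m))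
        rw [← hstep'] at hk
        have hLa : L^2 ≤ (a (N+m))^2 := by
          have := hLle (N+m); nlinarith [hL0]
        have haR : a (N+m) = ‖R (z (N+m))‖ := rfl
        have : ‖z (N+(m+1)) - y‖^2 + (l/(1-l)) * L^2 ≤ ‖z (N+m) - y‖^2 := by
          have h' : ‖z (N+(m+1)) - y‖^2 + (l/(1-l)) * ‖R (z (N+m))‖^2 ≤ ‖z (N+m) - y‖^2 := by
            rw [show N + (m+1) = N + m + 1 by ring]; exact hk
          have := mul_le_mul_of_nonneg_left (haR ▸ hLa) (le_of_lt hKpos)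
          linarith
        push_cast
        push_cast at ih
        have hexp : (l/(1-l)) * (((m:ℝ)+1) * L^2)
            = (l/(1-l)) * ((m:ℝ) * L^2) + (l/(1-l)) * L^2 := by ring
        linarith [this, ih]
    -- derive contradiction via Archimedean property
    have hC : 0 < l/(1-l) * L^2 := by positivity
    obtain ⟨m, hm⟩ := exists_nat_gt (‖z N - y‖^2 / (l/(1-l) * L^2))
    have hm' : ‖z N - y‖^2 < (m : ℝ) * (l/(1-l) * L^2) := by
      rw [div_lt_iff₀ hC] at hm; linarith
    have := hsum m
    nlinarith [sq_nonneg ‖z (N+m) - y‖]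
end

section
/- Fix n m : ℕ. Let D ⊆ EuclideanSpace ℝ (Fin n) be a nonempty closed convex set, K ⊆ EuclideanSpace ℝ (Fin m) a nonempty closed convex cone, and K° = {w | ∀ u ∈ K, ⟨w, u⟩ ≤ 0} its polar cone. Let P be a symmetric positive semidefinite real n×n matrix, H a real m×n matrix, q ∈ ℝⁿ, g ∈ ℝᵐ, and α, β > 0 with α‖P‖ + αβ‖H‖² < 1. Define the PIPG operator T(z, w) = (z⁺, w⁺) by z⁺ = π_D(z − α(P z + q + Hᵀ w)) and w⁺ = π_{K°}(w + β(H(2z⁺ − z) − g)), and the M-quadratic form Q_M(v₁, v₂) = α⁻¹‖v₁‖² − ⟨v₁, P v₁⟩ − 2⟨H v₁, v₂⟩ + β⁻¹‖v₂‖². Then the reflected operator T̃ = 2T − id is nonexpansive in the M-norm: for all pairs x = (z₁, w₁) and y = (z₂, w₂), writing T̃x − T̃y = (d₁, d₂) and x − y = (e₁, e₂), one has Q_M(d₁, d₂) ≤ Q_M(e₁, e₂). Equivalently, there exists an M-nonexpansive map T̃ with T = (1/2) id + (1/2) T̃. -/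
open Matrix RealInnerProductSpace

lemma adj_inner' {k l : ℕ} (A : Matrix (Fin k) (Fin l) ℝ)
    (x : EuclideanSpace ℝ (Fin l)) (y : EuclideanSpace ℝ (Fin k)) :
    ⟪Matrix.toEuclideanLin A x, y⟫ = ⟪x, Matrix.toEuclideanLin Aᵀ y⟫ := by
  have h : Aᵀ = Aᴴ := by
    ext i j; simp [Matrix.conjTranspose_apply]
  rw [h, Matrix.toEuclideanLin_conjTranspose_eq_adjoint]
  exact (LinearMap.adjoint_inner_right _ _ _).symm

lemma proj_char' {E : Type*} [NormedAddCommGroup E] [InnerProductSpace ℝ E]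
    {C : Set E} (hC : Convex ℝ C) {p x : E} (hp : p ∈ C)
    (hmin : ∀ d ∈ C, ‖x - p‖ ≤ ‖x - d‖) : ∀ d ∈ C, ⟪x - p, d - p⟫ ≤ 0 := by
  apply (norm_eq_iInf_iff_real_inner_le_zero hC hp).mp
  haveI : Nonempty C := ⟨⟨p, hp⟩⟩
  refine le_antisymm (le_ciInf fun w => hmin w w.2) ?_
  refine ciInf_le_of_le ?_ ⟨p, hp⟩ le_rfl
  exact ⟨0, by rintro r ⟨w, rfl⟩; exact norm_nonneg _⟩

lemma inner_comb {E : Type*} [NormedAddCommGroup E] [InnerProductSpace ℝ E] (x y u v : E) :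
    ⟪(2 : ℝ) • x - y, (2 : ℝ) • u - v⟫ =
      4 * ⟪x, u⟫ - 2 * ⟪x, v⟫ - 2 * ⟪y, u⟫ + ⟪y, v⟫ := by
  simp only [inner_sub_left, inner_sub_right, real_inner_smul_left, real_inner_smul_right]
  ring


set_option maxHeartbeats 1000000 in
/-- the reflected PIPG operator `T̃ = 2T - id` is nonexpansive in the
`M`-norm, where `Q_M(v₁,v₂) = α⁻¹‖v₁‖² - ⟪v₁, P v₁⟫ - 2⟪H v₁, v₂⟫ + β⁻¹‖v₂‖²` is the
quadratic form of the PIPG matrix `M`, under the step-size condition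
`α‖P‖ + αβ‖H‖² < 1`. -/
theorem stmt18 {n m : ℕ}
    (D : Set (EuclideanSpace ℝ (Fin n)))
    (hDne : D.Nonempty) (hDclosed : IsClosed D) (hDconv : Convex ℝ D)
    (K : Set (EuclideanSpace ℝ (Fin m)))
    (hK0 : (0 : EuclideanSpace ℝ (Fin m)) ∈ K)
    (hKadd : ∀ u ∈ K, ∀ v ∈ K, u + v ∈ K)
    (hKsmul : ∀ c : ℝ, 0 ≤ c → ∀ u ∈ K, c • u ∈ K)
    (hKclosed : IsClosed K)
    (projD : EuclideanSpace ℝ (Fin n) → EuclideanSpace ℝ (Fin n))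
    (hprojD : ∀ x, projD x ∈ D ∧ ∀ d ∈ D, ‖x - projD x‖ ≤ ‖x - d‖)
    (projKp : EuclideanSpace ℝ (Fin m) → EuclideanSpace ℝ (Fin m))
    (hprojKp : ∀ x, (∀ u ∈ K, ⟪projKp x, u⟫ ≤ 0) ∧
      ∀ d : EuclideanSpace ℝ (Fin m), (∀ u ∈ K, ⟪d, u⟫ ≤ 0) → ‖x - projKp x‖ ≤ ‖x - d‖)
    (P : Matrix (Fin n) (Fin n) ℝ) (hPsymm : P.IsSymm)
    (hPpsd : ∀ v : EuclideanSpace ℝ (Fin n), 0 ≤ ⟪v, Matrix.toEuclideanLin P v⟫)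
    (H : Matrix (Fin m) (Fin n) ℝ)
    (q : EuclideanSpace ℝ (Fin n)) (g : EuclideanSpace ℝ (Fin m))
    (α β : ℝ) (hα : 0 < α) (hβ : 0 < β)
    (hstep : α * l2OpNorm P + α * β * (l2OpNorm H) ^ 2 < 1)
    (Tz : EuclideanSpace ℝ (Fin n) → EuclideanSpace ℝ (Fin m) → EuclideanSpace ℝ (Fin n))
    (Tw : EuclideanSpace ℝ (Fin n) → EuclideanSpace ℝ (Fin m) → EuclideanSpace ℝ (Fin m))
    (hTz : ∀ z w, Tz z w = projD (z - α • (Matrix.toEuclideanLin P z + q +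
      Matrix.toEuclideanLin Hᵀ w)))
    (hTw : ∀ z w, Tw z w = projKp (w + β • (Matrix.toEuclideanLin H
      ((2 : ℝ) • Tz z w - z) - g)))
    (QM : EuclideanSpace ℝ (Fin n) → EuclideanSpace ℝ (Fin m) → ℝ)
    (hQM : ∀ v₁ v₂, QM v₁ v₂ = α⁻¹ * ‖v₁‖ ^ 2 - ⟪v₁, Matrix.toEuclideanLin P v₁⟫ -
      2 * ⟪Matrix.toEuclideanLin H v₁, v₂⟫ + β⁻¹ * ‖v₂‖ ^ 2) :
    ∀ z₁ w₁ z₂ w₂,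
      QM (((2 : ℝ) • Tz z₁ w₁ - z₁) - ((2 : ℝ) • Tz z₂ w₂ - z₂))
         (((2 : ℝ) • Tw z₁ w₁ - w₁) - ((2 : ℝ) • Tw z₂ w₂ - w₂)) ≤
        QM (z₁ - z₂) (w₁ - w₂) := by
  intro z₁ w₁ z₂ w₂
  -- polar cone convexity
  have hKpconv : Convex ℝ {d : EuclideanSpace ℝ (Fin m) | ∀ u ∈ K, ⟪d, u⟫ ≤ 0} := by
    intro d₁ h₁ d₂ h₂ s t hs ht hst u hu
    have A := h₁ u hu
    have B := h₂ u hu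
    show ⟪s • d₁ + t • d₂, u⟫ ≤ 0
    rw [inner_add_left, real_inner_smul_left, real_inner_smul_left]
    nlinarith [mul_nonneg hs (neg_nonneg.mpr A), mul_nonneg ht (neg_nonneg.mpr B)]
  have VID : ∀ x, ∀ d ∈ D, ⟪x - projD x, d - projD x⟫ ≤ 0 := fun x =>
    proj_char' hDconv (hprojD x).1 (hprojD x).2
  have VIK : ∀ x : EuclideanSpace ℝ (Fin m),
      ∀ d ∈ {d : EuclideanSpace ℝ (Fin m) | ∀ u ∈ K, ⟪d, u⟫ ≤ 0},
      ⟪x - projKp x, d - projKp x⟫ ≤ 0 := fun x =>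
    proj_char' hKpconv (hprojKp x).1 (fun d hd => (hprojKp x).2 d hd)
  have e1 : ⟪(z₁ - α • (Matrix.toEuclideanLin P z₁ + q + Matrix.toEuclideanLin Hᵀ w₁)) - Tz z₁ w₁, Tz z₂ w₂ - Tz z₁ w₁⟫ ≤ 0 := by
    rw [hTz z₁ w₁, hTz z₂ w₂]
    exact VID _ _ (hprojD _).1
  have e2 : ⟪(z₂ - α • (Matrix.toEuclideanLin P z₂ + q + Matrix.toEuclideanLin Hᵀ w₂)) - Tz z₂ w₂, Tz z₁ w₁ - Tz z₂ w₂⟫ ≤ 0 := by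
    rw [hTz z₁ w₁, hTz z₂ w₂]
    exact VID _ _ (hprojD _).1
  have f1 : ⟪(w₁ + β • (Matrix.toEuclideanLin H ((2 : ℝ) • Tz z₁ w₁ - z₁) - g)) - Tw z₁ w₁,
      Tw z₂ w₂ - Tw z₁ w₁⟫ ≤ 0 := by
    rw [hTw z₁ w₁, hTw z₂ w₂]
    exact VIK _ _ (hprojKp _).1
  have f2 : ⟪(w₂ + β • (Matrix.toEuclideanLin H ((2 : ℝ) • Tz z₂ w₂ - z₂) - g)) - Tw z₂ w₂,
      Tw z₁ w₁ - Tw z₂ w₂⟫ ≤ 0 := by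
    rw [hTw z₁ w₁, hTw z₂ w₂]
    exact VIK _ _ (hprojKp _).1
  obtain ⟨a, ha⟩ : ∃ v, v = Tz z₁ w₁ - Tz z₂ w₂ := ⟨_, rfl⟩
  obtain ⟨b, hb⟩ : ∃ v, v = Tw z₁ w₁ - Tw z₂ w₂ := ⟨_, rfl⟩
  obtain ⟨e, he⟩ : ∃ v, v = z₁ - z₂ := ⟨_, rfl⟩
  obtain ⟨f, hf⟩ : ∃ v, v = w₁ - w₂ := ⟨_, rfl⟩
  -- combined monotonicity inequalities
  have h1 : (0 : ℝ) ≤ ⟪(e - α • (Matrix.toEuclideanLin P e + Matrix.toEuclideanLin Hᵀ f)) - a, a⟫ := by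
    have key : ((z₁ - α • (Matrix.toEuclideanLin P z₁ + q + Matrix.toEuclideanLin Hᵀ w₁)) - Tz z₁ w₁)
        - ((z₂ - α • (Matrix.toEuclideanLin P z₂ + q + Matrix.toEuclideanLin Hᵀ w₂)) - Tz z₂ w₂)
        = (e - α • (Matrix.toEuclideanLin P e + Matrix.toEuclideanLin Hᵀ f)) - a := by
      rw [ha, he, hf]
      simp only [map_sub]
      module
    have e1' : (0 : ℝ) ≤ ⟪(z₁ - α • (Matrix.toEuclideanLin P z₁ + q + Matrix.toEuclideanLin Hᵀ w₁)) - Tz z₁ w₁, a⟫ := by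
      rw [ha, show Tz z₁ w₁ - Tz z₂ w₂ = -(Tz z₂ w₂ - Tz z₁ w₁) from (neg_sub _ _).symm,
        inner_neg_right]
      linarith
    have e2' : ⟪(z₂ - α • (Matrix.toEuclideanLin P z₂ + q + Matrix.toEuclideanLin Hᵀ w₂)) - Tz z₂ w₂, a⟫ ≤ 0 := by
      rw [ha]; exact e2
    rw [← key, inner_sub_left]
    linarith
  have h2 : (0 : ℝ) ≤ ⟪(f + β • ((2 : ℝ) • Matrix.toEuclideanLin H a - Matrix.toEuclideanLin H e)) - b, b⟫ := by
    have key : ((w₁ + β • (Matrix.toEuclideanLin H ((2 : ℝ) • Tz z₁ w₁ - z₁) - g)) - Tw z₁ w₁)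
        - ((w₂ + β • (Matrix.toEuclideanLin H ((2 : ℝ) • Tz z₂ w₂ - z₂) - g)) - Tw z₂ w₂)
        = (f + β • ((2 : ℝ) • Matrix.toEuclideanLin H a - Matrix.toEuclideanLin H e)) - b := by
      rw [ha, hb, he, hf]
      simp only [map_sub, LinearMap.map_smul]
      module
    have f1' : (0 : ℝ) ≤ ⟪(w₁ + β • (Matrix.toEuclideanLin H ((2 : ℝ) • Tz z₁ w₁ - z₁) - g)) - Tw z₁ w₁, b⟫ := by
      rw [hb, show Tw z₁ w₁ - Tw z₂ w₂ = -(Tw z₂ w₂ - Tw z₁ w₁) from (neg_sub _ _).symm,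
        inner_neg_right]
      linarith
    have f2' : ⟪(w₂ + β • (Matrix.toEuclideanLin H ((2 : ℝ) • Tz z₂ w₂ - z₂) - g)) - Tw z₂ w₂, b⟫ ≤ 0 := by
      rw [hb]; exact f2
    rw [← key, inner_sub_left]
    linarith
  -- scalar forms
  have h1s : (0 : ℝ) ≤ ⟪e, a⟫ - α * (⟪Matrix.toEuclideanLin P e, a⟫ + ⟪Matrix.toEuclideanLin Hᵀ f, a⟫) - ⟪a, a⟫ := by
    have expand : ⟪(e - α • (Matrix.toEuclideanLin P e + Matrix.toEuclideanLin Hᵀ f)) - a, a⟫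
        = ⟪e, a⟫ - α * (⟪Matrix.toEuclideanLin P e, a⟫ + ⟪Matrix.toEuclideanLin Hᵀ f, a⟫) - ⟪a, a⟫ := by
      rw [inner_sub_left, inner_sub_left, real_inner_smul_left, inner_add_left]
    rwa [expand] at h1
  have h2s : (0 : ℝ) ≤ ⟪f, b⟫ + β * (2 * ⟪Matrix.toEuclideanLin H a, b⟫ - ⟪Matrix.toEuclideanLin H e, b⟫) - ⟪b, b⟫ := by
    have expand : ⟪(f + β • ((2 : ℝ) • Matrix.toEuclideanLin H a - Matrix.toEuclideanLin H e)) - b, b⟫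
        = ⟪f, b⟫ + β * (2 * ⟪Matrix.toEuclideanLin H a, b⟫ - ⟪Matrix.toEuclideanLin H e, b⟫) - ⟪b, b⟫ := by
      simp only [inner_sub_left, inner_add_left, real_inner_smul_left] <;> ring
    rwa [expand] at h2
  have h1d : (0 : ℝ) ≤ α⁻¹ * ⟪e, a⟫ - (⟪Matrix.toEuclideanLin P e, a⟫ + ⟪Matrix.toEuclideanLin Hᵀ f, a⟫) - α⁻¹ * ⟪a, a⟫ := by
    have hmul := mul_nonneg (inv_nonneg.mpr hα.le) h1s
    have heq : α⁻¹ * (⟪e, a⟫ - α * (⟪Matrix.toEuclideanLin P e, a⟫ + ⟪Matrix.toEuclideanLin Hᵀ f, a⟫) - ⟪a, a⟫)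
        = α⁻¹ * ⟪e, a⟫ - (⟪Matrix.toEuclideanLin P e, a⟫ + ⟪Matrix.toEuclideanLin Hᵀ f, a⟫) - α⁻¹ * ⟪a, a⟫ := by
      field_simp <;> ring
    rwa [heq] at hmul
  have h2d : (0 : ℝ) ≤ β⁻¹ * ⟪f, b⟫ + (2 * ⟪Matrix.toEuclideanLin H a, b⟫ - ⟪Matrix.toEuclideanLin H e, b⟫) - β⁻¹ * ⟪b, b⟫ := by
    have hmul := mul_nonneg (inv_nonneg.mpr hβ.le) h2s
    have heq : β⁻¹ * (⟪f, b⟫ + β * (2 * ⟪Matrix.toEuclideanLin H a, b⟫ - ⟪Matrix.toEuclideanLin H e, b⟫) - ⟪b, b⟫)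
        = β⁻¹ * ⟪f, b⟫ + (2 * ⟪Matrix.toEuclideanLin H a, b⟫ - ⟪Matrix.toEuclideanLin H e, b⟫) - β⁻¹ * ⟪b, b⟫ := by
      field_simp <;> ring
    rwa [heq] at hmul
  -- symmetry facts
  have sP : ⟪e, Matrix.toEuclideanLin P a⟫ = ⟪a, Matrix.toEuclideanLin P e⟫ := by
    have h := adj_inner' P a e
    rw [hPsymm] at h
    rw [← h]
    exact real_inner_comm _ _
  have sPc : ⟪Matrix.toEuclideanLin P e, a⟫ = ⟪a, Matrix.toEuclideanLin P e⟫ := real_inner_comm _ _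
  have sH : ⟪Matrix.toEuclideanLin Hᵀ f, a⟫ = ⟪Matrix.toEuclideanLin H a, f⟫ := by
    have h := adj_inner' Hᵀ f a
    rw [Matrix.transpose_transpose] at h
    rw [h]
    exact real_inner_comm _ _
  have sea : ⟪e, a⟫ = ⟪a, e⟫ := real_inner_comm _ _
  have sfb : ⟪f, b⟫ = ⟪b, f⟫ := real_inner_comm _ _
  have psd : (0 : ℝ) ≤ ⟪a, Matrix.toEuclideanLin P a⟫ := hPpsd a
  -- rewrite goal
  have garg1 : (2 : ℝ) • Tz z₁ w₁ - z₁ - ((2 : ℝ) • Tz z₂ w₂ - z₂) = (2 : ℝ) • a - e := by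
    rw [ha, he]; module
  have garg2 : (2 : ℝ) • Tw z₁ w₁ - w₁ - ((2 : ℝ) • Tw z₂ w₂ - w₂) = (2 : ℝ) • b - f := by
    rw [hb, hf]; module
  rw [← he, ← hf] at *
  rw [garg1, garg2, hQM, hQM]
  -- expansion identities
  have n1 : ‖(2 : ℝ) • a - e‖ ^ 2 = 4 * ⟪a, a⟫ - 4 * ⟪a, e⟫ + ‖e‖ ^ 2 := by
    rw [← real_inner_self_eq_norm_sq, ← real_inner_self_eq_norm_sq, inner_comb, sea]
    ring
  have n2 : ‖(2 : ℝ) • b - f‖ ^ 2 = 4 * ⟪b, b⟫ - 4 * ⟪b, f⟫ + ‖f‖ ^ 2 := by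
    rw [← real_inner_self_eq_norm_sq, ← real_inner_self_eq_norm_sq, inner_comb, sfb]
    ring
  have pq : ⟪(2 : ℝ) • a - e, Matrix.toEuclideanLin P ((2 : ℝ) • a - e)⟫
      = 4 * ⟪a, Matrix.toEuclideanLin P a⟫ - 2 * ⟪a, Matrix.toEuclideanLin P e⟫ - 2 * ⟪e, Matrix.toEuclideanLin P a⟫ + ⟪e, Matrix.toEuclideanLin P e⟫ := by
    rw [map_sub, LinearMap.map_smul, inner_comb]
  have cr : ⟪Matrix.toEuclideanLin H ((2 : ℝ) • a - e), (2 : ℝ) • b - f⟫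
      = 4 * ⟪Matrix.toEuclideanLin H a, b⟫ - 2 * ⟪Matrix.toEuclideanLin H a, f⟫ - 2 * ⟪Matrix.toEuclideanLin H e, b⟫ + ⟪Matrix.toEuclideanLin H e, f⟫ := by
    rw [map_sub, LinearMap.map_smul, inner_comb]
  rw [n1, n2, pq, cr, sP]
  rw [sea, sPc, sH] at h1d
  rw [sfb] at h2d
  linarith [h1d, h2d, psd]
end

section
/- Fix n m : ℕ. Let D ⊆ EuclideanSpace ℝ (Fin n) be a nonempty closed convex set, K ⊆ EuclideanSpace ℝ (Fin m) a nonempty closed convex cone, and K° = {w | ∀ u ∈ K, ⟨w, u⟩ ≤ 0} its polar cone. Let P be a symmetric positive semidefinite real n×n matrix, H a real m×n matrix, q ∈ ℝⁿ, g ∈ ℝᵐ, and α, β > 0 with α‖P‖ + αβ‖H‖² < 1. Define the PIPG operator T(z, w) = (z⁺, w⁺) by z⁺ = π_D(z − α(P z + q + Hᵀ w)) and w⁺ = π_{K°}(w + β(H(2z⁺ − z) − g)). Suppose T has a fixed point. Then for any initial point (z₀, w₀), the iterates (z_{k+1}, w_{k+1}) = T(z_k, w_k) converge to some (z⋆, w⋆)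 with T(z⋆, w⋆) = (z⋆, w⋆); moreover z⋆ ∈ D, H z⋆ − g ∈ K, and z⋆ is optimal: for every z ∈ D with H z − g ∈ K, (1/2)⟨z⋆, P z⋆⟩ + ⟨q, z⋆⟩ ≤ (1/2)⟨z, P z⟩ + ⟨q, z⟩. -/
open Matrix Filter RealInnerProductSpace

section aux
variable {F : Type*} [NormedAddCommGroup F] [InnerProductSpace ℝ F]

/-- Variational inequality for a metric projection given by its characterization. -/
lemma pipg_proj_vi {C : Set F} (hC : Convex ℝ C) (proj : F → F)
    (hmem : ∀ x, proj x ∈ C) (hmin : ∀ x, ∀ d ∈ C, ‖x - proj x‖ ≤ ‖x - d‖) :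
    ∀ x, ∀ d ∈ C, ⟪x - proj x, d - proj x⟫ ≤ 0 := by
  intro x d hd
  have hm := hmem x
  haveI : Nonempty C := ⟨⟨proj x, hm⟩⟩
  have hinf : (‖x - proj x‖ = ⨅ w : C, ‖x - w‖) := by
    refine le_antisymm (le_ciInf fun w => hmin x w w.2) ?_
    exact ciInf_le ⟨0, fun r ⟨s, hs⟩ => hs ▸ norm_nonneg _⟩ (⟨proj x, hm⟩ : C)
  exact (norm_eq_iInf_iff_real_inner_le_zero hC hm).1 hinf d hd

lemma pipg_proj_nonexp {C : Set F} (proj : F → F)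
    (hvi : ∀ x, ∀ d ∈ C, ⟪x - proj x, d - proj x⟫ ≤ 0) (hmem : ∀ x, proj x ∈ C)
    (x y : F) : ‖proj x - proj y‖ ≤ ‖x - y‖ := by
  have h1 := hvi x (proj y) (hmem y)
  have h2 := hvi y (proj x) (hmem x)
  have key : ‖proj x - proj y‖ ^ 2 ≤ ⟪x - y, proj x - proj y⟫ := by
    have e1 : ⟪x - proj x, proj y - proj x⟫ + ⟪y - proj y, proj x - proj y⟫
        = ⟪x - y, proj y - proj x⟫ + ‖proj x - proj y‖ ^ 2 := by
      rw [← real_inner_self_eq_norm_sq]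
      simp only [inner_sub_left, inner_sub_right]
      ring
    have e2 : ⟪x - y, proj y - proj x⟫ = - ⟪x - y, proj x - proj y⟫ := by
      rw [← inner_neg_right]; congr 1; abel
    nlinarith [h1, h2]
  have hcs := real_inner_le_norm (x - y) (proj x - proj y)
  nlinarith [norm_nonneg (proj x - proj y), norm_nonneg (x - y)]

/-- positive definiteness of a scalar quadratic form. -/
lemma pipg_quadPD {Ac Bc c : ℝ} (hA : 0 < Ac) (hB : 0 < Bc) (hc : 0 ≤ c)
    (h : c ^ 2 < Ac * Bc) :
    ∃ μ > 0, ∀ a b : ℝ, μ * (a ^ 2 + b ^ 2) ≤ Ac * a ^ 2 - 2 * c * (a * b) + Bc * b ^ 2 := by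
  have hd : 0 < (Ac * Bc - c ^ 2) / (Ac + Bc) := div_pos (by linarith) (by linarith)
  refine ⟨min (Ac / 2) (min (Bc / 2) ((Ac * Bc - c ^ 2) / (Ac + Bc))),
    lt_min (by linarith) (lt_min (by linarith) hd), ?_⟩
  intro a b
  set μ := min (Ac / 2) (min (Bc / 2) ((Ac * Bc - c ^ 2) / (Ac + Bc))) with hμdef
  have hμ1 : μ ≤ Ac / 2 := min_le_left _ _
  have hμ2 : μ ≤ Bc / 2 := le_trans (min_le_right _ _) (min_le_left _ _)
  have hμ3 : μ ≤ (Ac * Bc - c ^ 2) / (Ac + Bc) := le_trans (min_le_right _ _) (min_le_right _ _)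
  have hμ0 : 0 < μ := lt_min (by linarith) (lt_min (by linarith) hd)
  have hp : 0 < Ac - μ := by linarith
  have hq : 0 < Bc - μ := by linarith
  have hpq : c ^ 2 ≤ (Ac - μ) * (Bc - μ) := by
    have h3 : μ * (Ac + Bc) ≤ Ac * Bc - c ^ 2 := by
      rw [← le_div_iff₀ (by positivity)] at *; linarith [hμ3]
    nlinarith [sq_nonneg μ]
  nlinarith [sq_nonneg ((Ac - μ) * a - c * b), mul_nonneg (sq_nonneg b) (sub_nonneg.2 hpq), hp,
    mul_pos hp hq]
end aux

section step
variable {E F : Type*} [NormedAddCommGroup E] [InnerProductSpace ℝ E]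
  [NormedAddCommGroup F] [InnerProductSpace ℝ F]

set_option maxHeartbeats 1000000 in
/-- One-step Fejér-type inequality for PIPG. -/
lemma pipg_step (Pl : E →ₗ[ℝ] E) (Hl : E →ₗ[ℝ] F) (Ht : F →ₗ[ℝ] E)
    (hadj : ∀ (v : E) (u : F), ⟪Ht u, v⟫ = ⟪u, Hl v⟫)
    (hsym : ∀ a b : E, ⟪Pl a, b⟫ = ⟪a, Pl b⟫)
    (cP cH : ℝ) (hcP : ∀ v : E, ⟪Pl v, v⟫ ≤ cP * ‖v‖ ^ 2)
    (hpsd : ∀ v : E, 0 ≤ ⟪Pl v, v⟫)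
    (hcH : ∀ v : E, ‖Hl v‖ ≤ cH * ‖v‖)
    {α β : ℝ} (hα : 0 < α) (hβ : 0 < β) (q : E) (g : F)
    (z0 z1 z' : E) (w0 w1 w' : F)
    (I1 : ⟪(z0 - α • (Pl z0 + q + Ht w0)) - z1, z' - z1⟫ ≤ 0)
    (I2 : ⟪(z' - α • (Pl z' + q + Ht w')) - z', z1 - z'⟫ ≤ 0)
    (I3 : ⟪(w0 + β • (Hl ((2:ℝ) • z1 - z0) - g)) - w1, w' - w1⟫ ≤ 0)
    (I4 : ⟪(w' + β • (Hl z' - g)) - w', w1 - w'⟫ ≤ 0) :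
    ‖z1 - z'‖ ^ 2 / α - 2 * ⟪Hl (z1 - z'), w1 - w'⟫ + ‖w1 - w'‖ ^ 2 / β
      + ((1 / α - cP / 2) * ‖z0 - z1‖ ^ 2 - 2 * cH * (‖z0 - z1‖ * ‖w0 - w1‖)
        + ‖w0 - w1‖ ^ 2 / β)
      ≤ ‖z0 - z'‖ ^ 2 / α - 2 * ⟪Hl (z0 - z'), w0 - w'⟫ + ‖w0 - w'‖ ^ 2 / β := by
  obtain ⟨dz, hdz⟩ : ∃ v, v = z0 - z1 := ⟨_, rfl⟩
  obtain ⟨dw, hdw⟩ : ∃ v, v = w0 - w1 := ⟨_, rfl⟩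
  obtain ⟨ez, hez⟩ : ∃ v, v = z1 - z' := ⟨_, rfl⟩
  obtain ⟨ew, hew⟩ : ∃ v, v = w1 - w' := ⟨_, rfl⟩
  rw [← hdz, ← hdw, ← hez, ← hew]
  -- primal inequalities
  have J1 : α * (⟪Pl z0, ez⟫ + ⟪q, ez⟫ + ⟪Ht w0, ez⟫) ≤ ⟪dz, ez⟫ := by
    have h : (z0 - α • (Pl z0 + q + Ht w0)) - z1 = dz - α • (Pl z0 + q + Ht w0) := by
      rw [hdz]; abel
    have h2 : z' - z1 = -ez := by rw [hez]; abel
    rw [h, h2, inner_neg_right, inner_sub_left, real_inner_smul_left, inner_add_left,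
      inner_add_left] at I1
    linarith
  have J2 : 0 ≤ α * (⟪Pl z', ez⟫ + ⟪q, ez⟫ + ⟪Ht w', ez⟫) := by
    have h : (z' - α • (Pl z' + q + Ht w')) - z' = -(α • (Pl z' + q + Ht w')) := by abel
    rw [h, ← hez, inner_neg_left, real_inner_smul_left, inner_add_left, inner_add_left] at I2
    linarith
  -- dual inequalities
  have J3 : -(β * (⟪Hl ((2:ℝ) • z1 - z0), ew⟫ - ⟪g, ew⟫)) ≤ ⟪dw, ew⟫ := by
    have h : (w0 + β • (Hl ((2:ℝ) • z1 - z0) - g)) - w1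
        = dw + β • (Hl ((2:ℝ) • z1 - z0) - g) := by rw [hdw]; abel
    have h2 : w' - w1 = -ew := by rw [hew]; abel
    rw [h, h2, inner_neg_right, inner_add_left, real_inner_smul_left, inner_sub_left] at I3
    linarith
  have J4 : β * (⟪Hl z', ew⟫ - ⟪g, ew⟫) ≤ 0 := by
    have h : (w' + β • (Hl z' - g)) - w' = β • (Hl z' - g) := by abel
    rw [h, ← hew, real_inner_smul_left, inner_sub_left] at I4
    linarith
  -- rewrite differences
  have hsplit : ⟪Pl z0, ez⟫ - ⟪Pl z', ez⟫ = ⟪Pl dz, ez⟫ + ⟪Pl ez, ez⟫ := by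
    have h : Pl z0 - Pl z' = Pl dz + Pl ez := by
      rw [← map_sub, ← map_add]; congr 1; rw [hdz, hez]; abel
    rw [← inner_sub_left, h, inner_add_left]
  have hsplit2 : ⟪Ht w0, ez⟫ - ⟪Ht w', ez⟫ = ⟪dw, Hl ez⟫ + ⟪ew, Hl ez⟫ := by
    rw [hadj, hadj, ← inner_sub_left, ← inner_add_left]
    congr 1; rw [hdw, hew]; abel
  have hsplit3 : ⟪Hl ((2:ℝ) • z1 - z0), ew⟫ - ⟪Hl z', ew⟫ = ⟪Hl ez, ew⟫ - ⟪Hl dz, ew⟫ := by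
    rw [← inner_sub_left, ← map_sub, ← inner_sub_left, ← map_sub]
    congr 2
    rw [hez, hdz]
    module
  -- combined, divide-free
  have Sp : α * (⟪Pl dz, ez⟫ + ⟪Pl ez, ez⟫ + ⟪dw, Hl ez⟫ + ⟪ew, Hl ez⟫) ≤ ⟪dz, ez⟫ := by
    nlinarith [J1, J2, hsplit, hsplit2]
  have Sd : β * (⟪Hl dz, ew⟫ - ⟪Hl ez, ew⟫) ≤ ⟪dw, ew⟫ := by
    nlinarith [J3, J4, hsplit3]
  -- norm expansions
  have nz : ‖z0 - z'‖ ^ 2 = ‖dz‖ ^ 2 + 2 * ⟪dz, ez⟫ + ‖ez‖ ^ 2 := by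
    have h : z0 - z' = dz + ez := by rw [hdz, hez]; abel
    rw [h, ← real_inner_self_eq_norm_sq, ← real_inner_self_eq_norm_sq,
      ← real_inner_self_eq_norm_sq, inner_add_add_self, real_inner_comm ez dz]
    ring
  have nw : ‖w0 - w'‖ ^ 2 = ‖dw‖ ^ 2 + 2 * ⟪dw, ew⟫ + ‖ew‖ ^ 2 := by
    have h : w0 - w' = dw + ew := by rw [hdw, hew]; abel
    rw [h, ← real_inner_self_eq_norm_sq, ← real_inner_self_eq_norm_sq,
      ← real_inner_self_eq_norm_sq, inner_add_add_self, real_inner_comm ew dw]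
    ring
  have ncross : ⟪Hl (z0 - z'), w0 - w'⟫
      = ⟪Hl dz, dw⟫ + ⟪Hl dz, ew⟫ + ⟪Hl ez, dw⟫ + ⟪Hl ez, ew⟫ := by
    have h : z0 - z' = dz + ez := by rw [hdz, hez]; abel
    have h2 : w0 - w' = dw + ew := by rw [hdw, hew]; abel
    rw [h, h2, map_add, inner_add_left, inner_add_right, inner_add_right]
    ring
  -- PSD completion of square
  have hps : 0 ≤ (1/4) * ⟪Pl dz, dz⟫ + ⟪Pl dz, ez⟫ + ⟪Pl ez, ez⟫ := by
    have h0 := hpsd ((1/2 : ℝ) • dz + ez)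
    have hexp : ⟪Pl ((1/2 : ℝ) • dz + ez), (1/2 : ℝ) • dz + ez⟫
        = (1/4) * ⟪Pl dz, dz⟫ + (1/2) * ⟪Pl dz, ez⟫ + (1/2) * ⟪Pl ez, dz⟫
          + ⟪Pl ez, ez⟫ := by
      rw [map_add, LinearMap.map_smul, inner_add_left, inner_add_right, inner_add_right,
        real_inner_smul_left, real_inner_smul_left, real_inner_smul_right,
        real_inner_smul_right]
      ring
    have hc : ⟪Pl ez, dz⟫ = ⟪Pl dz, ez⟫ := by rw [hsym, real_inner_comm]
    rw [hexp, hc] at h0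
    linarith
  have bP : ⟪Pl dz, dz⟫ ≤ cP * ‖dz‖ ^ 2 := hcP dz
  have bH : ⟪Hl dz, dw⟫ ≤ cH * (‖dz‖ * ‖dw‖) := by
    have h1 := real_inner_le_norm (Hl dz) dw
    have h2 := mul_le_mul_of_nonneg_right (hcH dz) (norm_nonneg dw)
    nlinarith
  -- comm facts
  have c1 : ⟪dw, Hl ez⟫ = ⟪Hl ez, dw⟫ := real_inner_comm _ _
  have c2 : ⟪ew, Hl ez⟫ = ⟪Hl ez, ew⟫ := real_inner_comm _ _
  rw [← sub_nonneg]
  have hab : 0 < α * β := mul_pos hα hβ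
  have key : 0 ≤ α * β *
      ((‖z0 - z'‖ ^ 2 / α - 2 * ⟪Hl (z0 - z'), w0 - w'⟫ + ‖w0 - w'‖ ^ 2 / β) -
       (‖ez‖ ^ 2 / α - 2 * ⟪Hl ez, ew⟫ + ‖ew‖ ^ 2 / β
        + ((1 / α - cP / 2) * ‖dz‖ ^ 2 - 2 * cH * (‖dz‖ * ‖dw‖) + ‖dw‖ ^ 2 / β))) := by
    have expand : α * β *
      ((‖z0 - z'‖ ^ 2 / α - 2 * ⟪Hl (z0 - z'), w0 - w'⟫ + ‖w0 - w'‖ ^ 2 / β) -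
       (‖ez‖ ^ 2 / α - 2 * ⟪Hl ez, ew⟫ + ‖ew‖ ^ 2 / β
        + ((1 / α - cP / 2) * ‖dz‖ ^ 2 - 2 * cH * (‖dz‖ * ‖dw‖) + ‖dw‖ ^ 2 / β)))
      = β * (‖z0 - z'‖ ^ 2 - ‖ez‖ ^ 2 - ‖dz‖ ^ 2)
        + α * (‖w0 - w'‖ ^ 2 - ‖ew‖ ^ 2 - ‖dw‖ ^ 2)
        + α * β * (- 2 * ⟪Hl (z0 - z'), w0 - w'⟫ + 2 * ⟪Hl ez, ew⟫
            + cP / 2 * ‖dz‖ ^ 2 + 2 * cH * (‖dz‖ * ‖dw‖)) := by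
      field_simp
      ring
    rw [expand, nz, nw, ncross]
    have hSpβ := mul_le_mul_of_nonneg_left Sp hβ.le
    have hSdα := mul_le_mul_of_nonneg_left Sd hα.le
    have hpsαβ := mul_le_mul_of_nonneg_left hps hab.le
    have hbPαβ := mul_le_mul_of_nonneg_left bP hab.le
    have hbHαβ := mul_le_mul_of_nonneg_left bH hab.le
    rw [c1, c2] at hSpβ
    nlinarith [hSpβ, hSdα, hpsαβ, hbPαβ, hbHαβ]
  nlinarith [key, hab]
end step

section cone
variable {F : Type*} [NormedAddCommGroup F] [InnerProductSpace ℝ F] [CompleteSpace F]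

/-- Properties of projection onto the polar cone: orthogonality and Moreau decomposition. -/
lemma pipg_cone (K : Set F) (hK0 : (0:F) ∈ K)
    (hKadd : ∀ u ∈ K, ∀ v ∈ K, u + v ∈ K)
    (hKsmul : ∀ c : ℝ, 0 ≤ c → ∀ u ∈ K, c • u ∈ K)
    (hKclosed : IsClosed K)
    (projKp : F → F)
    (hmem : ∀ x, ∀ u ∈ K, ⟪projKp x, u⟫ ≤ 0)
    (hvi : ∀ x, ∀ d : F, (∀ u ∈ K, ⟪d, u⟫ ≤ 0) → ⟪x - projKp x, d - projKp x⟫ ≤ 0)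
    (x : F) :
    ⟪x - projKp x, projKp x⟫ = 0 ∧ x - projKp x ∈ K := by
  have h0 : ⟪x - projKp x, -(projKp x)⟫ ≤ 0 := by
    have := hvi x 0 (fun u _ => by rw [inner_zero_left])
    rwa [zero_sub] at this
  have h2 : ⟪x - projKp x, projKp x⟫ ≤ 0 := by
    have hmem2 : ∀ u ∈ K, ⟪(2:ℝ) • projKp x, u⟫ ≤ 0 := fun u hu => by
      rw [real_inner_smul_left]; nlinarith [hmem x u hu]
    have := hvi x ((2:ℝ) • projKp x) hmem2
    have he : (2:ℝ) • projKp x - projKp x = projKp x := by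
      rw [two_smul]; abel
    rwa [he] at this
  have horth : ⟪x - projKp x, projKp x⟫ = 0 := by
    rw [inner_neg_right] at h0; linarith
  refine ⟨horth, ?_⟩
  -- Moreau / bipolar argument
  let K' : ConvexCone ℝ F :=
    { carrier := K
      smul_mem' := fun c hc u hu => hKsmul c hc.le u hu
      add_mem' := fun u hu v hv => hKadd u hu v hv }
  let C : ProperCone ℝ F :=
    { carrier := K
      add_mem' := fun hu hv => hKadd _ hu _ hv
      zero_mem' := hK0
      smul_mem' := fun c u hu => hKsmul c c.2 u hu
      isClosed' := hKclosed }
  by_contra hn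
  obtain ⟨y, hy, hneg⟩ := ProperCone.hyperplane_separation' C hn
  have hxm : 0 ≤ ⟪x - projKp x, y⟫ := by
    have hyK : ∀ u ∈ K, ⟪-y, u⟫ ≤ 0 := fun u hu => by
      rw [inner_neg_left]
      have := hy u hu
      rw [real_inner_comm] at this
      linarith
    have := hvi x (-y) hyK
    rw [inner_sub_right, horth, sub_zero, inner_neg_right] at this
    linarith
  linarith
end cone

/-- helper: nonneg sequence whose squares tend to zero tends to zero. -/
lemma pipg_sqrt_tend (f : ℕ → ℝ) (hf : ∀ k, 0 ≤ f k)
    (h : Filter.Tendsto (fun k => f k ^ 2) Filter.atTop (nhds 0)) :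
    Filter.Tendsto f Filter.atTop (nhds 0) := by
  have h2 := (Real.continuous_sqrt.tendsto 0).comp h
  rw [Real.sqrt_zero] at h2
  refine h2.congr (fun k => ?_)
  simp only [Function.comp_apply]
  exact Real.sqrt_sq (hf k)

set_option maxHeartbeats 2000000 in
/-- global convergence of PIPG.  Under the step-size condition
`α‖P‖ + αβ‖H‖² < 1`, if the PIPG operator has a fixed point, then from any starting
point the PIPG iterates converge to a fixed point `(z⋆, w⋆)`; moreover `z⋆ ∈ D`,
`H z⋆ - g ∈ K`, and `z⋆` is optimal for the quadratic program. -/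
theorem stmt19 {n m : ℕ}
    (D : Set (EuclideanSpace ℝ (Fin n)))
    (hDne : D.Nonempty) (hDclosed : IsClosed D) (hDconv : Convex ℝ D)
    (K : Set (EuclideanSpace ℝ (Fin m)))
    (hK0 : (0 : EuclideanSpace ℝ (Fin m)) ∈ K)
    (hKadd : ∀ u ∈ K, ∀ v ∈ K, u + v ∈ K)
    (hKsmul : ∀ c : ℝ, 0 ≤ c → ∀ u ∈ K, c • u ∈ K)
    (hKclosed : IsClosed K)
    (projD : EuclideanSpace ℝ (Fin n) → EuclideanSpace ℝ (Fin n))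
    (hprojD : ∀ x, projD x ∈ D ∧ ∀ d ∈ D, ‖x - projD x‖ ≤ ‖x - d‖)
    (projKp : EuclideanSpace ℝ (Fin m) → EuclideanSpace ℝ (Fin m))
    (hprojKp : ∀ x, (∀ u ∈ K, ⟪projKp x, u⟫ ≤ 0) ∧
      ∀ d : EuclideanSpace ℝ (Fin m), (∀ u ∈ K, ⟪d, u⟫ ≤ 0) → ‖x - projKp x‖ ≤ ‖x - d‖)
    (P : Matrix (Fin n) (Fin n) ℝ) (hPsymm : P.IsSymm)
    (hPpsd : ∀ v : EuclideanSpace ℝ (Fin n), 0 ≤ ⟪v, Matrix.toEuclideanLin P v⟫)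
    (H : Matrix (Fin m) (Fin n) ℝ)
    (q : EuclideanSpace ℝ (Fin n)) (g : EuclideanSpace ℝ (Fin m))
    (α β : ℝ) (hα : 0 < α) (hβ : 0 < β)
    (hstep : α * l2OpNorm P + α * β * (l2OpNorm H) ^ 2 < 1)
    (hfix : ∃ (z' : EuclideanSpace ℝ (Fin n)) (w' : EuclideanSpace ℝ (Fin m)),
      z' = projD (z' - α • (Matrix.toEuclideanLin P z' + q +
        Matrix.toEuclideanLin Hᵀ w')) ∧
      w' = projKp (w' + β • (Matrix.toEuclideanLin H z' - g)))
    (z : ℕ → EuclideanSpace ℝ (Fin n)) (w : ℕ → EuclideanSpace ℝ (Fin m))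
    (hiterz : ∀ k, z (k + 1) = projD (z k - α • (Matrix.toEuclideanLin P (z k) + q +
      Matrix.toEuclideanLin Hᵀ (w k))))
    (hiterw : ∀ k, w (k + 1) = projKp (w k + β • (Matrix.toEuclideanLin H
      ((2 : ℝ) • z (k + 1) - z k) - g))) :
    ∃ (zs : EuclideanSpace ℝ (Fin n)) (ws : EuclideanSpace ℝ (Fin m)),
      zs = projD (zs - α • (Matrix.toEuclideanLin P zs + q +
        Matrix.toEuclideanLin Hᵀ ws)) ∧
      ws = projKp (ws + β • (Matrix.toEuclideanLin H zs - g)) ∧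
      Tendsto z atTop (nhds zs) ∧ Tendsto w atTop (nhds ws) ∧
      zs ∈ D ∧ Matrix.toEuclideanLin H zs - g ∈ K ∧
      ∀ z' ∈ D, Matrix.toEuclideanLin H z' - g ∈ K →
        (1 / 2) * ⟪zs, Matrix.toEuclideanLin P zs⟫ + ⟪q, zs⟫ ≤
          (1 / 2) * ⟪z', Matrix.toEuclideanLin P z'⟫ + ⟪q, z'⟫ := by
  classical
  obtain ⟨zf, wf, hzf, hwf⟩ := hfix
  set Pl := Matrix.toEuclideanLin P with hPldef
  set Hl := Matrix.toEuclideanLin H with hHldef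
  set Ht := Matrix.toEuclideanLin Hᵀ with hHtdef
  -- operator norm facts
  have hPlv : ∀ v, ‖Pl v‖ ≤ l2OpNorm P * ‖v‖ := fun v => by
    unfold l2OpNorm
    have h := (Matrix.toEuclideanLin P).toContinuousLinearMap.le_opNorm v
    simp only [LinearMap.coe_toContinuousLinearMap'] at h
    rw [hPldef]
    exact h
  have hHlv : ∀ v, ‖Hl v‖ ≤ l2OpNorm H * ‖v‖ := fun v => by
    unfold l2OpNorm
    have h := (Matrix.toEuclideanLin H).toContinuousLinearMap.le_opNorm v
    simp only [LinearMap.coe_toContinuousLinearMap'] at h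
    rw [hHldef]
    exact h
  have hcP0 : (0:ℝ) ≤ l2OpNorm P := by unfold l2OpNorm; positivity
  have hcH0 : (0:ℝ) ≤ l2OpNorm H := by unfold l2OpNorm; positivity
  have hcP : ∀ v, ⟪Pl v, v⟫ ≤ l2OpNorm P * ‖v‖ ^ 2 := fun v => by
    have h1 := real_inner_le_norm (Pl v) v
    have h2 := mul_le_mul_of_nonneg_right (hPlv v) (norm_nonneg v)
    nlinarith
  have hpsd' : ∀ v, (0:ℝ) ≤ ⟪Pl v, v⟫ := fun v => by
    rw [real_inner_comm]; exact hPpsd v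
  -- adjoint facts
  have hadj : ∀ (v : EuclideanSpace ℝ (Fin n)) (u : EuclideanSpace ℝ (Fin m)),
      ⟪Ht u, v⟫ = ⟪u, Hl v⟫ := by
    have hHt : Ht = LinearMap.adjoint Hl := by
      rw [hHtdef, hHldef, ← Matrix.toEuclideanLin_conjTranspose_eq_adjoint,
        Matrix.conjTranspose_eq_transpose_of_trivial]
    intro v u
    rw [hHt, LinearMap.adjoint_inner_left]
  have hsym : ∀ a b : EuclideanSpace ℝ (Fin n), ⟪Pl a, b⟫ = ⟪a, Pl b⟫ := by
    have hPt : LinearMap.adjoint Pl = Pl := by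
      rw [hPldef, ← Matrix.toEuclideanLin_conjTranspose_eq_adjoint,
        Matrix.conjTranspose_eq_transpose_of_trivial, hPsymm]
    intro a b
    calc ⟪Pl a, b⟫ = ⟪LinearMap.adjoint Pl a, b⟫ := by rw [hPt]
    _ = ⟪a, Pl b⟫ := LinearMap.adjoint_inner_left _ _ _
  -- polar cone set
  set Kp : Set (EuclideanSpace ℝ (Fin m)) := {w | ∀ u ∈ K, ⟪w, u⟫ ≤ 0} with hKpdef
  have hKpconv : Convex ℝ Kp := by
    intro a ha b hb s t hs ht hst
    intro u hu
    have h1 := ha u hu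
    have h2 := hb u hu
    rw [inner_add_left, real_inner_smul_left, real_inner_smul_left]
    nlinarith
  have memKp : ∀ x, projKp x ∈ Kp := fun x => (hprojKp x).1
  have viD : ∀ x, ∀ d ∈ D, ⟪x - projD x, d - projD x⟫ ≤ 0 :=
    pipg_proj_vi hDconv projD (fun x => (hprojD x).1) (fun x => (hprojD x).2)
  have viK : ∀ x, ∀ d ∈ Kp, ⟪x - projKp x, d - projKp x⟫ ≤ 0 :=
    pipg_proj_vi hKpconv projKp memKp (fun x d hd => (hprojKp x).2 d hd)
  have cone : ∀ x, ⟪x - projKp x, projKp x⟫ = 0 ∧ x - projKp x ∈ K := fun x =>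
    pipg_cone K hK0 hKadd hKsmul hKclosed projKp (fun x => (hprojKp x).1)
      (fun x d hd => viK x d hd) x
  -- the one-step inequality for iterates
  have stepk : ∀ (z' : EuclideanSpace ℝ (Fin n)) (w' : EuclideanSpace ℝ (Fin m)),
      z' = projD (z' - α • (Pl z' + q + Ht w')) →
      w' = projKp (w' + β • (Hl z' - g)) → ∀ k : ℕ,
      ‖z (k+1) - z'‖ ^ 2 / α - 2 * ⟪Hl (z (k+1) - z'), w (k+1) - w'⟫ + ‖w (k+1) - w'‖ ^ 2 / β
        + ((1 / α - l2OpNorm P / 2) * ‖z k - z (k+1)‖ ^ 2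
           - 2 * l2OpNorm H * (‖z k - z (k+1)‖ * ‖w k - w (k+1)‖) + ‖w k - w (k+1)‖ ^ 2 / β)
        ≤ ‖z k - z'‖ ^ 2 / α - 2 * ⟪Hl (z k - z'), w k - w'⟫ + ‖w k - w'‖ ^ 2 / β := by
    intro z' w' hz' hw' k
    have hz'D : z' ∈ D := by rw [hz']; exact (hprojD _).1
    have hzk1D : z (k+1) ∈ D := by rw [hiterz k]; exact (hprojD _).1
    have hw'Kp : w' ∈ Kp := by rw [hw']; exact memKp _
    have hwk1Kp : w (k+1) ∈ Kp := by rw [hiterw k]; exact memKp _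
    have I1 := viD (z k - α • (Pl (z k) + q + Ht (w k))) z' hz'D
    rw [← hiterz k] at I1
    have I2 := viD (z' - α • (Pl z' + q + Ht w')) (z (k+1)) hzk1D
    rw [← hz'] at I2
    have I3 := viK (w k + β • (Hl ((2:ℝ) • z (k+1) - z k) - g)) w' hw'Kp
    rw [← hiterw k] at I3
    have I4 := viK (w' + β • (Hl z' - g)) (w (k+1)) hwk1Kp
    rw [← hw'] at I4
    exact pipg_step Pl Hl Ht hadj hsym (l2OpNorm P) (l2OpNorm H) hcP hpsd'
      (fun v => hHlv v) hα hβ q g (z k) (z (k+1)) z' (w k) (w (k+1)) w' I1 I2 I3 I4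
  -- positive-definiteness constants
  have hab : 0 < α * β := mul_pos hα hβ
  have hsPC : α * l2OpNorm P < 1 := by nlinarith [mul_nonneg hab.le (sq_nonneg (l2OpNorm H))]
  obtain ⟨ν, hν0, hνq⟩ := pipg_quadPD (show (0:ℝ) < 1/α by positivity)
    (show (0:ℝ) < 1/β by positivity) hcH0 (by
      have e : (1/α) * (1/β) = 1/(α*β) := by field_simp
      rw [e, lt_div_iff₀ hab]
      nlinarith [mul_nonneg hα.le hcP0])
  obtain ⟨μ, hμ0, hμq⟩ := pipg_quadPD
    (show (0:ℝ) < 1/α - l2OpNorm P / 2 by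
      rw [sub_pos, div_lt_div_iff₀ (by norm_num : (0:ℝ) < 2) hα]; nlinarith)
    (show (0:ℝ) < 1/β by positivity) hcH0 (by
      have e : (1/α - l2OpNorm P / 2) * (1/β) = (1 - α * l2OpNorm P / 2)/(α*β) := by
        rw [eq_div_iff (ne_of_gt hab)]
        field_simp
      rw [e, lt_div_iff₀ hab]
      nlinarith [mul_nonneg hα.le hcP0])
  -- lower bound for the Lyapunov function
  have Vlow : ∀ (a : EuclideanSpace ℝ (Fin n)) (b : EuclideanSpace ℝ (Fin m)),
      ν * (‖a‖^2 + ‖b‖^2) ≤ ‖a‖^2/α - 2*⟪Hl a, b⟫ + ‖b‖^2/β := by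
    intro a b
    have h1 := hνq ‖a‖ ‖b‖
    have h2 : ⟪Hl a, b⟫ ≤ l2OpNorm H * (‖a‖*‖b‖) := by
      have h3 := real_inner_le_norm (Hl a) b
      have h4 := mul_le_mul_of_nonneg_right (hHlv a) (norm_nonneg b)
      nlinarith
    have e1 : ‖a‖^2/α = 1/α*‖a‖^2 := by ring
    have e2 : ‖b‖^2/β = 1/β*‖b‖^2 := by ring
    linarith
  -- Lyapunov decrease with explicit μ
  have Vstep : ∀ (z' : EuclideanSpace ℝ (Fin n)) (w' : EuclideanSpace ℝ (Fin m)),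
      z' = projD (z' - α • (Pl z' + q + Ht w')) →
      w' = projKp (w' + β • (Hl z' - g)) → ∀ k : ℕ,
      (‖z (k+1) - z'‖ ^ 2 / α - 2 * ⟪Hl (z (k+1) - z'), w (k+1) - w'⟫ + ‖w (k+1) - w'‖ ^ 2 / β)
        + μ * (‖z k - z (k+1)‖^2 + ‖w k - w (k+1)‖^2)
        ≤ ‖z k - z'‖ ^ 2 / α - 2 * ⟪Hl (z k - z'), w k - w'⟫ + ‖w k - w'‖ ^ 2 / β := by
    intro z' w' hz' hw' k
    have h1 := stepk z' w' hz' hw' k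
    have h2 := hμq ‖z k - z (k+1)‖ ‖w k - w (k+1)‖
    have e2 : ‖w k - w (k+1)‖^2/β = 1/β*‖w k - w (k+1)‖^2 := by ring
    linarith
  -- Stage 1: Fejér monotonicity w.r.t. the given fixed point
  set V1 : ℕ → ℝ := fun k =>
    ‖z k - zf‖^2/α - 2*⟪Hl (z k - zf), w k - wf⟫ + ‖w k - wf‖^2/β with hV1def
  have hV1step := Vstep zf wf hzf hwf
  have hV1anti : Antitone V1 := antitone_nat_of_succ_le (fun k => by
    have h1 := hV1step k
    have h2 : 0 ≤ μ * (‖z k - z (k+1)‖^2 + ‖w k - w (k+1)‖^2) := by positivity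
    simp only [hV1def]
    linarith)
  have hV1nonneg : ∀ k, 0 ≤ V1 k := fun k =>
    le_trans (by positivity) (Vlow (z k - zf) (w k - wf))
  have hV1lim : Tendsto V1 atTop (nhds (⨅ i, V1 i)) :=
    tendsto_atTop_ciInf hV1anti ⟨0, fun r ⟨k, hk⟩ => hk ▸ hV1nonneg k⟩
  have hV1shift : Tendsto (fun k => V1 (k+1)) atTop (nhds (⨅ i, V1 i)) :=
    (tendsto_add_atTop_iff_nat 1).2 hV1lim
  have hdiff : Tendsto (fun k => V1 k - V1 (k+1)) atTop (nhds 0) := by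
    have h := hV1lim.sub hV1shift
    simpa using h
  have hsq : Tendsto (fun k => ‖z k - z (k+1)‖^2 + ‖w k - w (k+1)‖^2) atTop (nhds 0) := by
    refine squeeze_zero (fun k => by positivity) (fun k => ?_) (by simpa using hdiff.div_const μ)
    rw [le_div_iff₀ hμ0]
    have h1 := hV1step k
    simp only [hV1def]
    nlinarith
  have hzd : Tendsto (fun j => z (j+1) - z j) atTop (nhds 0) := by
    rw [tendsto_zero_iff_norm_tendsto_zero]
    refine pipg_sqrt_tend _ (fun k => norm_nonneg _) ?_
    refine squeeze_zero (fun k => by positivity) (fun k => ?_) hsq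
    rw [norm_sub_rev]
    exact le_add_of_nonneg_right (by positivity)
  have hwd : Tendsto (fun j => w (j+1) - w j) atTop (nhds 0) := by
    rw [tendsto_zero_iff_norm_tendsto_zero]
    refine pipg_sqrt_tend _ (fun k => norm_nonneg _) ?_
    refine squeeze_zero (fun k => by positivity) (fun k => ?_) hsq
    rw [norm_sub_rev]
    exact le_add_of_nonneg_left (by positivity)
  -- boundedness and subsequences
  have hnormb : ∀ k, ν * (‖z k - zf‖^2 + ‖w k - wf‖^2) ≤ V1 0 :=
    fun k => le_trans (Vlow _ _) (hV1anti (Nat.zero_le k))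
  set R : ℝ := Real.sqrt (V1 0 / ν) with hRdef
  have hzball : ∀ k, z k ∈ Metric.closedBall zf R := fun k => by
    rw [Metric.mem_closedBall, dist_eq_norm]
    have h2 : ‖z k - zf‖^2 ≤ V1 0/ν := by
      rw [le_div_iff₀ hν0]
      nlinarith [hnormb k, sq_nonneg ‖w k - wf‖]
    calc ‖z k - zf‖ = Real.sqrt (‖z k - zf‖^2) := (Real.sqrt_sq (norm_nonneg _)).symm
    _ ≤ R := Real.sqrt_le_sqrt h2
  have hwball : ∀ k, w k ∈ Metric.closedBall wf R := fun k => by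
    rw [Metric.mem_closedBall, dist_eq_norm]
    have h2 : ‖w k - wf‖^2 ≤ V1 0/ν := by
      rw [le_div_iff₀ hν0]
      nlinarith [hnormb k, sq_nonneg ‖z k - zf‖]
    calc ‖w k - wf‖ = Real.sqrt (‖w k - wf‖^2) := (Real.sqrt_sq (norm_nonneg _)).symm
    _ ≤ R := Real.sqrt_le_sqrt h2
  obtain ⟨zl, -, φ, hφ, hzφ⟩ :=
    tendsto_subseq_of_bounded Metric.isBounded_closedBall hzball
  obtain ⟨wl, -, ψ, hψ, hwψ⟩ :=
    tendsto_subseq_of_bounded Metric.isBounded_closedBall (fun k => hwball (φ k))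
  have hσmono : StrictMono (fun k => φ (ψ k)) := hφ.comp hψ
  have hzσ : Tendsto (fun k => z (φ (ψ k))) atTop (nhds zl) := hzφ.comp hψ.tendsto_atTop
  have hwσ : Tendsto (fun k => w (φ (ψ k))) atTop (nhds wl) := hwψ
  -- shifted limits
  have hzσ1 : Tendsto (fun k => z (φ (ψ k) + 1)) atTop (nhds zl) := by
    have h1 : Tendsto (fun k => z (φ (ψ k) + 1) - z (φ (ψ k))) atTop (nhds 0) :=
      hzd.comp hσmono.tendsto_atTop
    have h2 := h1.add hzσ
    simpa using h2
  have hwσ1 : Tendsto (fun k => w (φ (ψ k) + 1)) atTop (nhds wl) := by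
    have h1 : Tendsto (fun k => w (φ (ψ k) + 1) - w (φ (ψ k))) atTop (nhds 0) :=
      hwd.comp hσmono.tendsto_atTop
    have h2 := h1.add hwσ
    simpa using h2
  -- continuity of the maps involved
  have contD : Continuous projD := by
    have lip : LipschitzWith 1 projD := LipschitzWith.of_dist_le_mul fun x y => by
      rw [dist_eq_norm, dist_eq_norm, NNReal.coe_one, one_mul]
      exact pipg_proj_nonexp projD viD (fun x => (hprojD x).1) x y
    exact lip.continuous
  have contKp : Continuous projKp := by
    have lip : LipschitzWith 1 projKp := LipschitzWith.of_dist_le_mul fun x y => by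
      rw [dist_eq_norm, dist_eq_norm, NNReal.coe_one, one_mul]
      exact pipg_proj_nonexp projKp viK memKp x y
    exact lip.continuous
  have contPl : Continuous Pl := Pl.continuous_of_finiteDimensional
  have contHl : Continuous Hl := Hl.continuous_of_finiteDimensional
  have contHt : Continuous Ht := Ht.continuous_of_finiteDimensional
  -- the limit point is a fixed point
  have hfix1 : Tendsto (fun k => z (φ (ψ k)) - α • (Pl (z (φ (ψ k))) + q + Ht (w (φ (ψ k)))))
      atTop (nhds (zl - α • (Pl zl + q + Ht wl))) :=
    hzσ.sub (Tendsto.const_smul ((((contPl.tendsto zl).comp hzσ).add tendsto_const_nhds).add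
      ((contHt.tendsto wl).comp hwσ)) α)
  have hzlfix : zl = projD (zl - α • (Pl zl + q + Ht wl)) := by
    have h2 := (contD.tendsto _).comp hfix1
    have h3 : ((fun x => projD x) ∘ fun k =>
        z (φ (ψ k)) - α • (Pl (z (φ (ψ k))) + q + Ht (w (φ (ψ k)))))
        = fun k => z (φ (ψ k) + 1) := by
      funext k
      simp only [Function.comp_apply]
      rw [← hiterz]
    rw [h3] at h2
    exact tendsto_nhds_unique hzσ1 h2
  have harg : Tendsto (fun k => (2:ℝ) • z (φ (ψ k) + 1) - z (φ (ψ k))) atTop (nhds zl) := by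
    have h1 := (hzσ1.const_smul (2:ℝ)).sub hzσ
    have e : (2:ℝ) • zl - zl = zl := by rw [two_smul]; abel
    rwa [e] at h1
  have hfix2 : Tendsto (fun k =>
      w (φ (ψ k)) + β • (Hl ((2:ℝ) • z (φ (ψ k) + 1) - z (φ (ψ k))) - g))
      atTop (nhds (wl + β • (Hl zl - g))) :=
    hwσ.add (Tendsto.const_smul (((contHl.tendsto zl).comp harg).sub tendsto_const_nhds) β)
  have hwlfix : wl = projKp (wl + β • (Hl zl - g)) := by
    have h2 := (contKp.tendsto _).comp hfix2
    have h3 : ((fun x => projKp x) ∘ fun k =>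
        w (φ (ψ k)) + β • (Hl ((2:ℝ) • z (φ (ψ k) + 1) - z (φ (ψ k))) - g))
        = fun k => w (φ (ψ k) + 1) := by
      funext k
      simp only [Function.comp_apply]
      rw [← hiterw]
    rw [h3] at h2
    exact tendsto_nhds_unique hwσ1 h2
  -- Stage 2: Fejér monotonicity w.r.t. the limit fixed point gives full convergence
  set V2 : ℕ → ℝ := fun k =>
    ‖z k - zl‖^2/α - 2*⟪Hl (z k - zl), w k - wl⟫ + ‖w k - wl‖^2/β with hV2def
  have hV2step := Vstep zl wl hzlfix hwlfix
  have hV2anti : Antitone V2 := antitone_nat_of_succ_le (fun k => by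
    have h1 := hV2step k
    have h2 : 0 ≤ μ * (‖z k - z (k+1)‖^2 + ‖w k - w (k+1)‖^2) := by positivity
    simp only [hV2def]
    linarith)
  have hV2nonneg : ∀ k, 0 ≤ V2 k := fun k =>
    le_trans (by positivity) (Vlow (z k - zl) (w k - wl))
  have hV2lim : Tendsto V2 atTop (nhds (⨅ i, V2 i)) :=
    tendsto_atTop_ciInf hV2anti ⟨0, fun r ⟨k, hk⟩ => hk ▸ hV2nonneg k⟩
  have hza : Tendsto (fun k => z (φ (ψ k)) - zl) atTop (nhds 0) := by
    have := hzσ.sub (tendsto_const_nhds (x := zl))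
    simpa using this
  have hwa : Tendsto (fun k => w (φ (ψ k)) - wl) atTop (nhds 0) := by
    have := hwσ.sub (tendsto_const_nhds (x := wl))
    simpa using this
  have hV2σ : Tendsto (fun k => V2 (φ (ψ k))) atTop (nhds 0) := by
    have t1 : Tendsto (fun k => ‖z (φ (ψ k)) - zl‖^2/α) atTop (nhds 0) := by
      have := (hza.norm.pow 2).div_const α
      simpa using this
    have t3 : Tendsto (fun k => ‖w (φ (ψ k)) - wl‖^2/β) atTop (nhds 0) := by
      have := (hwa.norm.pow 2).div_const β
      simpa using this
    have t2 : Tendsto (fun k => 2*⟪Hl (z (φ (ψ k)) - zl), w (φ (ψ k)) - wl⟫)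
        atTop (nhds 0) := by
      have hin := Filter.Tendsto.inner (𝕜 := ℝ) (((contHl.tendsto 0).comp hza)) hwa
      have := hin.const_mul (2:ℝ)
      simpa using this
    have := (t1.sub t2).add t3
    simpa [hV2def] using this
  have hV2inf0 : (⨅ i, V2 i) = (0:ℝ) :=
    tendsto_nhds_unique (hV2lim.comp hσmono.tendsto_atTop) hV2σ
  have hV2tend : Tendsto V2 atTop (nhds 0) := hV2inf0 ▸ hV2lim
  have hzfin : Tendsto z atTop (nhds zl) := by
    rw [tendsto_iff_norm_sub_tendsto_zero]
    refine pipg_sqrt_tend _ (fun k => norm_nonneg _) ?_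
    refine squeeze_zero (fun k => by positivity) (fun k => ?_)
      (by simpa using hV2tend.div_const ν)
    rw [le_div_iff₀ hν0]
    have h := Vlow (z k - zl) (w k - wl)
    simp only [hV2def]
    nlinarith [sq_nonneg ‖w k - wl‖]
  have hwfin : Tendsto w atTop (nhds wl) := by
    rw [tendsto_iff_norm_sub_tendsto_zero]
    refine pipg_sqrt_tend _ (fun k => norm_nonneg _) ?_
    refine squeeze_zero (fun k => by positivity) (fun k => ?_)
      (by simpa using hV2tend.div_const ν)
    rw [le_div_iff₀ hν0]
    have h := Vlow (z k - zl) (w k - wl)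
    simp only [hV2def]
    nlinarith [sq_nonneg ‖z k - zl‖]
  -- properties of the limit fixed point
  have hmemD : zl ∈ D := by rw [hzlfix]; exact (hprojD _).1
  have hce := cone (wl + β • (Hl zl - g))
  have he : wl + β • (Hl zl - g) - projKp (wl + β • (Hl zl - g)) = β • (Hl zl - g) := by
    rw [← hwlfix]; abel
  have hKmem : Hl zl - g ∈ K := by
    have hc2 := hce.2
    rw [he] at hc2
    have h3 := hKsmul β⁻¹ (by positivity) _ hc2
    rwa [smul_smul, inv_mul_cancel₀ hβ.ne', one_smul] at h3
  have horth : ⟪Hl zl - g, wl⟫ = 0 := by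
    have hc1 := hce.1
    rw [he, ← hwlfix, real_inner_smul_left] at hc1
    rcases mul_eq_zero.1 hc1 with h | h
    · exact absurd h hβ.ne'
    · exact h
  have hwlKp : wl ∈ Kp := by rw [hwlfix]; exact memKp _
  refine ⟨zl, wl, hzlfix, hwlfix, hzfin, hwfin, hmemD, hKmem, ?_⟩
  -- optimality
  intro z' hz'D hz'K
  have hVI := viD (zl - α • (Pl zl + q + Ht wl)) z' hz'D
  rw [← hzlfix] at hVI
  have h1 : 0 ≤ ⟪Pl zl, z' - zl⟫ + ⟪q, z' - zl⟫ + ⟪Ht wl, z' - zl⟫ := by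
    have he2 : (zl - α • (Pl zl + q + Ht wl)) - zl = -(α • (Pl zl + q + Ht wl)) := by abel
    rw [he2, inner_neg_left, real_inner_smul_left, inner_add_left, inner_add_left] at hVI
    nlinarith [hα]
  have h2 : ⟪Ht wl, z' - zl⟫ ≤ 0 := by
    rw [hadj]
    have hsplit : Hl (z' - zl) = (Hl z' - g) - (Hl zl - g) := by rw [map_sub]; abel
    rw [hsplit, inner_sub_right]
    have ha1 : ⟪wl, Hl z' - g⟫ ≤ 0 := hwlKp _ hz'K
    have ha2 : ⟪wl, Hl zl - g⟫ = 0 := by rw [real_inner_comm]; exact horth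
    linarith
  have h3 : 0 ≤ ⟪Pl zl, z' - zl⟫ + ⟪q, z' - zl⟫ := by linarith
  have hcvx : 0 ≤ ⟪z' - zl, Pl (z' - zl)⟫ := hPpsd _
  have c1 : ⟪z', Pl zl⟫ = ⟪Pl zl, z'⟫ := real_inner_comm _ _
  have c2 : ⟪zl, Pl z'⟫ = ⟪Pl zl, z'⟫ := (hsym zl z').symm
  have c3 : ⟪Pl zl, zl⟫ = ⟪zl, Pl zl⟫ := real_inner_comm _ _
  have e2 : ⟪z' - zl, Pl (z' - zl)⟫ = ⟪z', Pl z'⟫ - 2*⟪Pl zl, z'⟫ + ⟪zl, Pl zl⟫ := by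
    rw [map_sub, inner_sub_left, inner_sub_right, inner_sub_right, c1, c2]
    ring
  have e1 : ⟪Pl zl, z' - zl⟫ = ⟪Pl zl, z'⟫ - ⟪Pl zl, zl⟫ := inner_sub_right _ _ _
  have e3 : ⟪q, z' - zl⟫ = ⟪q, z'⟫ - ⟪q, zl⟫ := inner_sub_right _ _ _
  rw [e2] at hcvx
  rw [e1, e3, c3] at h3
  linarith
end
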